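/- arXiv:2203.07158 — 5 statements merged into one kernel-verified Lean document; each statement's English description precedes it below -/
import Mathlib

section
/- For every k ≥ 1 and every valid refinement sequence Π = (π₀^k, …, π_n) for the bisplitter B_k, every partition π_i occurring in Π contains prefix blocks only, i.e., every block of every π_i equals B_σ for some bit string σ of length at most k. -/
/-! ## Labeled transition systems with initial partition, partitions, refinement -/

structure LTS (S A : Type) where
  tr : S → A → S → Prop
  init : Finset (Finset S)

def inSameBlock {S : Type} (π : Finset (Finset S)) (s t : S) : Prop :=
  ∃ B ∈ π, s ∈ B ∧ t ∈ B

def IsBlockPartition {S : Type} (π : Finset (Finset S)) : Prop :=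
  ∅ ∉ π ∧ (∀ B ∈ π, ∀ B' ∈ π, B ≠ B' → Disjoint B B') ∧ ∀ s : S, ∃ B ∈ π, s ∈ B

def RefinesPart {S : Type} (π' π : Finset (Finset S)) : Prop :=
  ∀ B' ∈ π', ∃ B ∈ π, B' ⊆ B

def ReachesSet {S A : Type} (L : LTS S A) (s : S) (a : A) (U : Finset S) : Prop :=
  ∃ t ∈ U, L.tr s a t

def StableUnderBlock {S A : Type} (L : LTS S A) (V U : Finset S) : Prop :=
  ∀ a : A, (∀ s ∈ V, ReachesSet L s a U) ∨ (∀ s ∈ V, ¬ ReachesSet L s a U)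

def IsStablePartition {S A : Type} (L : LTS S A) (π : Finset (Finset S)) : Prop :=
  ∀ B ∈ π, ∀ C ∈ π, StableUnderBlock L B C

def SplitWitness {S A : Type} (L : LTS S A) (π : Finset (Finset S)) (s t : S) : Prop :=
  ∃ a s', L.tr s a s' ∧ ∀ t', L.tr t a t' → ¬ inSameBlock π s' t'

def ValidRefinement {S A : Type} (L : LTS S A) (π π' : Finset (Finset S)) : Prop :=
  RefinesPart π' π ∧ π' ≠ π ∧
  ∀ s t : S, ¬ inSameBlock π' s t →
    (¬ inSameBlock π s t ∨ SplitWitness L π s t ∨ SplitWitness L π t s)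

def ValidRefinementSeq {S A : Type} (L : LTS S A) (n : ℕ)
    (seq : ℕ → Finset (Finset S)) : Prop :=
  seq 0 = L.init ∧ (∀ i ≤ n, IsBlockPartition (seq i)) ∧
  (∀ i < n, ValidRefinement L (seq i) (seq (i + 1))) ∧
  IsStablePartition L (seq n)

/-! ## Refinement costs -/

def IRCstep {S : Type} [DecidableEq S] (π π' : Finset (Finset S)) : ℕ :=
  ∑ B ∈ π, (B.card - (π'.filter fun B' => B' ⊆ B).sup Finset.card)

def IRCseq {S : Type} [DecidableEq S] (n : ℕ) (seq : ℕ → Finset (Finset S)) : ℕ :=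
  ∑ i ∈ Finset.range n, IRCstep (seq i) (seq (i + 1))

noncomputable def IRC {S A : Type} [DecidableEq S] (L : LTS S A) : ℕ :=
  sInf {c | ∃ n seq, ValidRefinementSeq L n seq ∧ IRCseq n seq = c}

noncomputable def PIRC {S A : Type} (L : LTS S A) : ℕ :=
  sInf {n | ∃ seq, ValidRefinementSeq L n seq}

/-! ## Bisimulation, end structures, paths -/

def IsBisimulation {S A : Type} (L : LTS S A) (R : S → S → Prop) : Prop :=
  Symmetric R ∧ (∀ s t, R s t → inSameBlock L.init s t) ∧
  ∀ s t a s', R s t → L.tr s a s' → ∃ t', L.tr t a t' ∧ R s' t'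

def Bisimilar {S A : Type} (L : LTS S A) (s t : S) : Prop :=
  ∃ R, IsBisimulation L R ∧ R s t

def TransClosed {S A : Type} (L : LTS S A) (U : Set S) : Prop :=
  ∀ s ∈ U, ∀ a t, L.tr s a t → t ∈ U

def EndStructure {S A : Type} (L : LTS S A) (U : Set S) : Prop :=
  U.Nonempty ∧ TransClosed L U ∧
  ∀ V : Set S, TransClosed L V → (U ∩ V).Nonempty → U ⊆ V

def PathTo {S A : Type} (L : LTS S A) : List A → S → S → Prop
  | [], s, t => s = t
  | a :: w, s, t => ∃ u, L.tr s a u ∧ PathTo L w u t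

/-! ## The bisplitter B_k -/

def bsStep {k : ℕ} (σ : Fin k → Bool) (j : Fin (k - 1)) : Fin k → Bool :=
  if σ ⟨j.val + 1, by have := j.isLt; omega⟩ = false then σ
  else fun p => if p.val < j.val then σ p else if p.val = j.val then !(σ p) else false

def prefixBlock (k : ℕ) (p : List Bool) : Finset (Fin k → Bool) :=
  Finset.univ.filter fun σ => p <+: List.ofFn σ

def bisplitter (k : ℕ) : LTS (Fin k → Bool) (Fin (k - 1)) where
  tr := fun s a t => t = bsStep s a
  init := {prefixBlock k [false], prefixBlock k [true]}

def zeroState (k : ℕ) : Fin k → Bool := fun _ => false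

def oneState (k : ℕ) : Fin k → Bool := fun i => decide (i.val = 0)

/-- The bisplitter with the initial partition updated by the end structure oracle. -/
def bisplitter' (k : ℕ) : LTS (Fin k → Bool) (Fin (k - 1)) where
  tr := (bisplitter k).tr
  init := { {zeroState k}, prefixBlock k [false] \ {zeroState k},
            {oneState k}, prefixBlock k [true] \ {oneState k} }

/-! ## The layered bisplitter C_k -/

def treeHeight (k : ℕ) : ℕ := Nat.clog 2 (k / 2)

abbrev TreeWord (h : ℕ) := Σ i : Fin (h + 1), Fin i.val → Bool

abbrev CState (k : ℕ) :=
  ((Fin k → Bool) × Fin (2 ^ k)) ⊕ ((Fin k → Bool) × TreeWord (treeHeight k))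

instance instCStateDecEq (k : ℕ) : DecidableEq (CState k) := inferInstance

instance instCStateFintype (k : ℕ) : Fintype (CState k) := inferInstance

def rootWord (k : ℕ) : TreeWord (treeHeight k) := ⟨⟨0, Nat.succ_pos _⟩, Fin.elim0⟩

def binVal (w : List Bool) : ℕ := w.foldl (fun acc b => 2 * acc + b.toNat) 0

/-- The a_j-successor in B_k for j = lbl(v) = min(bin(v)+1, k-1) (1-based),
    i.e. 0-based index min(bin(v), k-2). -/
def bkSucc (k : ℕ) (σ : Fin k → Bool) (v : List Bool) : Fin k → Bool :=
  if h : min (binVal v) (k - 2) < k - 1 then bsStep σ ⟨min (binVal v) (k - 2), h⟩ else σ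

def cTr (k : ℕ) (s : CState k) (α : Bool) (t : CState k) : Prop :=
  match s with
  | Sum.inl (σ, ℓ) =>
      if h : ℓ.val + 1 < 2 ^ k then t = Sum.inl (σ, ⟨ℓ.val + 1, h⟩)
      else t = Sum.inr (σ, rootWord k)
  | Sum.inr (σ, w) =>
      if h : w.1.val < treeHeight k then
        t = Sum.inr (σ, ⟨⟨w.1.val + 1, by omega⟩, Fin.snoc w.2 α⟩)
      else t = Sum.inl (bkSucc k σ (List.ofFn w.2 ++ [α]), ⟨0, by positivity⟩)

def firstBit {k : ℕ} (σ : Fin k → Bool) : Bool :=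
  if h : 0 < k then σ ⟨0, h⟩ else false

def stakeBlock (k : ℕ) (ℓ : Fin (2 ^ k)) (b : Bool) : Finset (CState k) :=
  Finset.univ.filter fun s => ∃ σ : Fin k → Bool, firstBit σ = b ∧ s = Sum.inl (σ, ℓ)

def treeBlock (k : ℕ) : Finset (CState k) :=
  Finset.univ.filter fun s => s.isRight = true

def cInit (k : ℕ) : Finset (Finset (CState k)) :=
  (Finset.univ.image fun p : Fin (2 ^ k) × Bool => stakeBlock k p.1 p.2) ∪ {treeBlock k}

def layered (k : ℕ) : LTS (CState k) Bool := ⟨cTr k, cInit k⟩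

/-- The stake index of level 1. -/
def firstLevel (k : ℕ) : Fin (2 ^ k) := ⟨0, by positivity⟩

/-- The stake index of level 2^k. -/
def lastLevel (k : ℕ) : Fin (2 ^ k) :=
  ⟨2 ^ k - 1, Nat.sub_lt (by positivity) one_pos⟩

def mkWord {h : ℕ} (w : List Bool) (hw : w.length ≤ h) : TreeWord h :=
  ⟨⟨w.length, Nat.lt_succ_of_le hw⟩, fun j => w.get j⟩

def endSet (k : ℕ) (σ₀ : Fin k → Bool) : Set (CState k) :=
  {s | (∃ ℓ, s = Sum.inl (σ₀, ℓ)) ∨ ∃ w, s = Sum.inr (σ₀, w)}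

/-! ## End structure partition -/

noncomputable def bisimClass {S A : Type} [Fintype S] (L : LTS S A) (s : S) : Finset S :=
  (Set.toFinite {t | Bisimilar L s t}).toFinset

def ESUnion {S A : Type} (L : LTS S A) : Set S := ⋃₀ {U | EndStructure L U}

noncomputable def esPartition {S A : Type} [Fintype S] [DecidableEq S] (L : LTS S A) :
    Finset (Finset S) :=
  ((Set.toFinite {B : Finset S | ∃ s ∈ ESUnion L, B = bisimClass L s}).toFinset ∪
      L.init.image fun B =>
        B \ (Set.toFinite {t | ∃ s ∈ ESUnion L, Bisimilar L s t}).toFinset) \ {∅}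

/-! ## The sequential splitter D_n (states 0,…,n-1 standing for 1,…,n) -/

def seqSplitter (n : ℕ) : LTS (Fin n) Unit where
  tr := fun s _ t => if h : s.val + 1 < n then t = ⟨s.val + 1, h⟩ else t = s
  init := {Finset.univ.filter fun s => s.val + 1 < n,
           Finset.univ.filter fun s => s.val + 1 = n}

def dPart (n i : ℕ) : Finset (Finset (Fin n)) :=
  {Finset.univ.filter fun s => s.val + i < n} ∪
    (Finset.univ.filter fun s : Fin n => n ≤ s.val + i).image fun s => {s}

/-! ## The fast parallel example G_k -/

def gLTS (k : ℕ) : LTS (Fin (2 ^ k) ⊕ Fin k) Unit where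
  tr := fun s _ t => ∃ (i : Fin (2 ^ k)) (j : Fin k),
    s = Sum.inl i ∧ t = Sum.inr j ∧ Nat.testBit i.val j.val = true
  init := {Finset.univ.filter fun s => s.isLeft = true} ∪
    Finset.univ.image fun j : Fin k => ({Sum.inr j} : Finset (Fin (2 ^ k) ⊕ Fin k))
/-! ## Auxiliary lemmas for STATEMENT 0 -/

lemma mem_prefixBlock_iff {k : ℕ} {p : List Bool} {σ : Fin k → Bool} :
    σ ∈ prefixBlock k p ↔
      p.length ≤ k ∧ ∀ i : Fin k, ∀ _ : i.val < p.length, p[i.val] = σ i := by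
  simp only [prefixBlock, Finset.mem_filter, Finset.mem_univ, true_and]
  constructor
  · intro h
    have hlen := h.length_le
    simp only [List.length_ofFn] at hlen
    refine ⟨hlen, fun i hi => ?_⟩
    have := h.getElem hi
    rw [this, List.getElem_ofFn]
  · rintro ⟨hlen, hget⟩
    rw [List.prefix_iff_eq_take]
    apply List.ext_getElem
    · simp [hlen]
    · intro i h1 h2
      have hik : i < k := lt_of_lt_of_le h1 hlen
      rw [List.getElem_take, List.getElem_ofFn]
      exact hget ⟨i, hik⟩ h1

lemma bsStep_lt {k : ℕ} (σ : Fin k → Bool) (j : Fin (k - 1)) (i : Fin k)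
    (h : i.val < j.val) : bsStep σ j i = σ i := by
  unfold bsStep
  split
  · rfl
  · simp [h]

lemma bsStep_mem_prefixBlock {k : ℕ} {p : List Bool} {σ : Fin k → Bool} {a : Fin (k - 1)}
    (hσ : σ ∈ prefixBlock k p) (hma : p.length ≤ a.val) : bsStep σ a ∈ prefixBlock k p := by
  rw [mem_prefixBlock_iff] at hσ ⊢
  refine ⟨hσ.1, fun i hi => ?_⟩
  rw [bsStep_lt σ a i (lt_of_lt_of_le hi hma)]
  exact hσ.2 i hi

lemma bisplitter_no_witness {k : ℕ} (π : Finset (Finset (Fin k → Bool)))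
    (hpart : IsBlockPartition π) (p : List Bool) (hB : prefixBlock k p ∈ π)
    (σ ρ : Fin k → Bool) (hσ : σ ∈ prefixBlock k p) (hρ : ρ ∈ prefixBlock k p)
    (hagree : ∀ i : Fin k, i.val ≤ p.length → σ i = ρ i) :
    ¬ SplitWitness (bisplitter k) π σ ρ := by
  rintro ⟨a, s', hs', hall⟩
  have hs'' : s' = bsStep σ a := hs'
  apply hall (bsStep ρ a) rfl
  subst hs''
  rcases le_or_gt p.length a.val with hma | ham
  · exact ⟨prefixBlock k p, hB, bsStep_mem_prefixBlock hσ hma,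
      bsStep_mem_prefixBlock hρ hma⟩
  · have hak : a.val + 1 < k := by have := a.isLt; omega
    have hbit : σ ⟨a.val + 1, hak⟩ = ρ ⟨a.val + 1, hak⟩ :=
      hagree ⟨a.val + 1, hak⟩ (show a.val + 1 ≤ p.length by omega)
    by_cases hb : σ ⟨a.val + 1, hak⟩ = false
    · have h1 : bsStep σ a = σ := by unfold bsStep; rw [if_pos hb]
      have h2 : bsStep ρ a = ρ := by unfold bsStep; rw [if_pos (hbit ▸ hb)]
      rw [h1, h2]
      exact ⟨prefixBlock k p, hB, hσ, hρ⟩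
    · have heq : bsStep σ a = bsStep ρ a := by
        unfold bsStep
        rw [if_neg hb, if_neg (hbit ▸ hb)]
        funext i
        rcases lt_trichotomy i.val a.val with h | h | h
        · simp only [h, if_pos]
          exact hagree i (by omega)
        · simp only [h, lt_irrefl, if_neg, if_pos, if_false, if_true]
          rw [hagree i (by omega)]
        · simp only [if_neg (by omega : ¬ i.val < a.val), if_neg (by omega : ¬ i.val = a.val)]
      rw [heq]
      obtain ⟨C, hC, hmem⟩ := hpart.2.2 (bsStep ρ a)
      exact ⟨C, hC, hmem, hmem⟩

/-- In every valid refinement sequence for the bisplitter `B_k` (k ≥ 1),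
every partition occurring in the sequence contains prefix blocks only. -/
theorem every_partition_in_valid_sequence_has_only_prefix_blocks
    (k : ℕ) (hk : 1 ≤ k) (n : ℕ) (seq : ℕ → Finset (Finset (Fin k → Bool)))
    (hseq : ValidRefinementSeq (bisplitter k) n seq) :
    ∀ i ≤ n, ∀ B ∈ seq i, ∃ p : List Bool, p.length ≤ k ∧ B = prefixBlock k p := by
  obtain ⟨h0, hpart, hvalid, -⟩ := hseq
  intro i
  induction i with
  | zero =>
    intro _ B hB
    rw [h0] at hB
    simp only [bisplitter, Finset.mem_insert, Finset.mem_singleton] at hB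
    rcases hB with h | h
    · exact ⟨[false], by simpa using hk, h⟩
    · exact ⟨[true], by simpa using hk, h⟩
  | succ i ih =>
    intro hi B' hB'
    have hin : i < n := by omega
    have ihle : i ≤ n := by omega
    obtain ⟨href, hne, hsplit⟩ := hvalid i hin
    obtain ⟨B, hBmem, hsub⟩ := href B' hB'
    obtain ⟨p, hpk, rfl⟩ := ih ihle B hBmem
    by_cases heq : B' = prefixBlock k p
    · exact ⟨p, hpk, heq⟩
    have hss : B' ⊂ prefixBlock k p := ⟨hsub, fun h => heq (le_antisymm hsub h)⟩
    obtain ⟨ρ₀, hρ₀B, hρ₀B'⟩ := Finset.exists_of_ssubset hss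
    have hpart' := hpart (i + 1) hi
    have hparti := hpart i ihle
    have hne' : B'.Nonempty :=
      Finset.nonempty_iff_ne_empty.2 (fun h => hpart'.1 (h ▸ hB'))
    obtain ⟨σ₀, hσ₀⟩ := hne'
    have hlt : p.length < k := by
      rcases lt_or_eq_of_le hpk with h | h
      · exact h
      exfalso
      apply hρ₀B'
      have hρσ : ρ₀ = σ₀ := by
        funext j
        have h1 := (mem_prefixBlock_iff.1 hρ₀B).2 j (by omega)
        have h2 := (mem_prefixBlock_iff.1 (hsub hσ₀)).2 j (by omega)
        rw [← h1, ← h2]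
      rw [hρσ]; exact hσ₀
    set idx : Fin k := ⟨p.length, hlt⟩ with hidx
    have claimA : ∀ σ ∈ B', ∀ ρ ∈ prefixBlock k p, ρ ∉ B' → σ idx ≠ ρ idx := by
      intro σ hσ ρ hρ hρ' hcontra
      have hnotsame : ¬ inSameBlock (seq (i + 1)) σ ρ := by
        rintro ⟨C, hC, hσC, hρC⟩
        rcases eq_or_ne C B' with rfl | hCne
        · exact hρ' hρC
        · exact (Finset.disjoint_left.1 (hpart'.2.1 C hC B' hB' hCne) hσC) hσ
      have hagree : ∀ j : Fin k, j.val ≤ p.length → σ j = ρ j := by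
        intro j hj
        rcases lt_or_eq_of_le hj with h | h
        · rw [← (mem_prefixBlock_iff.1 (hsub hσ)).2 j h, ← (mem_prefixBlock_iff.1 hρ).2 j h]
        · have hjidx : j = idx := Fin.ext h
          rw [hjidx]; exact hcontra
      rcases hsplit σ ρ hnotsame with h | h | h
      · exact h ⟨_, hBmem, hsub hσ, hρ⟩
      · exact bisplitter_no_witness _ hparti p hBmem σ ρ (hsub hσ) hρ hagree h
      · exact bisplitter_no_witness _ hparti p hBmem ρ σ hρ (hsub hσ)
          (fun j hj => (hagree j hj).symm) h
    have hconcat : ∀ hh : p.length < (p ++ [σ₀ idx]).length,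
        (p ++ [σ₀ idx])[p.length] = σ₀ idx :=
      fun hh => List.getElem_concat_length rfl _
    refine ⟨p ++ [σ₀ idx], by simp only [List.length_append, List.length_singleton]; omega, ?_⟩
    apply Finset.ext
    intro υ
    constructor
    · intro hυ
      rw [mem_prefixBlock_iff]
      refine ⟨by simp only [List.length_append, List.length_singleton]; omega, fun j hj => ?_⟩
      simp only [List.length_append, List.length_singleton] at hj
      rcases lt_or_eq_of_le (Nat.lt_succ_iff.1 hj) with h | h
      · rw [List.getElem_append_left h]
        exact (mem_prefixBlock_iff.1 (hsub hυ)).2 j h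
      · have hjidx : j = idx := Fin.ext h
        rw [List.getElem_concat_length h, hjidx]
        have h1 := claimA υ hυ ρ₀ hρ₀B hρ₀B'
        have h2 := claimA σ₀ hσ₀ ρ₀ hρ₀B hρ₀B'
        clear claimA
        cases hx : υ idx <;> cases hy : σ₀ idx <;> cases hz : ρ₀ idx <;> simp_all
    · intro hυ
      have hmem : υ ∈ prefixBlock k p := by
        rw [mem_prefixBlock_iff] at hυ ⊢
        refine ⟨le_of_lt hlt, fun j hj => ?_⟩
        have := hυ.2 j (by simp only [List.length_append, List.length_singleton]; omega)
        rwa [List.getElem_append_left hj] at this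
      by_contra hυ'
      apply claimA σ₀ hσ₀ υ hmem hυ'
      have h1 := (mem_prefixBlock_iff.1 hυ).2 idx
        (by simp only [List.length_append, List.length_singleton, hidx]; omega)
      rw [← h1]
      exact (hconcat (by simp)).symm
end

section
/- For every k > 1, every valid refinement sequence Π for the bisplitter B_k has refinement cost IRC(Π) = (k−1)·2^{k−1}; in particular IRC(B_k) = (k−1)·2^{k−1}. Consequently, with n = 2^k the number of states of B_k, IRC(B_k) = (1/2)·n·log₂(n/2), so partition refinement on the family (B_k) is Ω(n log n). -/
namespace BsplAux

open Finset

variable {k : ℕ}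

/-- Prefix block of depth `ℓ` with representative `τ`. -/
def pB (k ℓ : ℕ) (τ : Fin k → Bool) : Finset (Fin k → Bool) :=
  Finset.univ.filter fun σ => ∀ i : Fin k, (i : ℕ) < ℓ → σ i = τ i

/-- Change bit `ℓ` of `τ` to `b`. -/
def ext1 (τ : Fin k → Bool) (ℓ : ℕ) (b : Bool) : Fin k → Bool :=
  fun i => if (i : ℕ) = ℓ then b else τ i

lemma mem_pB {ℓ : ℕ} {τ σ : Fin k → Bool} :
    σ ∈ pB k ℓ τ ↔ ∀ i : Fin k, (i : ℕ) < ℓ → σ i = τ i := by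
  simp [pB]

lemma self_mem_pB {ℓ : ℕ} {τ : Fin k → Bool} : τ ∈ pB k ℓ τ :=
  mem_pB.2 fun _ _ => rfl

lemma pB_eq_of_mem {ℓ : ℕ} {τ σ : Fin k → Bool} (h : σ ∈ pB k ℓ τ) :
    pB k ℓ σ = pB k ℓ τ := by
  rw [mem_pB] at h
  ext ρ
  simp only [mem_pB]
  exact ⟨fun hr i hi => (hr i hi).trans (h i hi),
    fun hr i hi => (hr i hi).trans (h i hi).symm⟩

lemma pB_mono {ℓ m : ℕ} (h : ℓ ≤ m) (τ : Fin k → Bool) : pB k m τ ⊆ pB k ℓ τ := by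
  intro σ hσ
  rw [mem_pB] at *
  exact fun i hi => hσ i (lt_of_lt_of_le hi h)

lemma pB_top (τ : Fin k → Bool) : pB k k τ = {τ} := by
  ext σ
  simp only [mem_pB, Finset.mem_singleton]
  constructor
  · intro h; funext i; exact h i i.isLt
  · rintro rfl; exact fun _ _ => rfl

lemma mem_pB_ext1 {ℓ : ℕ} (hℓ : ℓ < k) {τ σ : Fin k → Bool} {b : Bool} :
    σ ∈ pB k (ℓ + 1) (ext1 τ ℓ b) ↔ σ ∈ pB k ℓ τ ∧ σ ⟨ℓ, hℓ⟩ = b := by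
  simp only [mem_pB, ext1]
  constructor
  · intro h
    refine ⟨fun i hi => ?_, ?_⟩
    · have := h i (by omega)
      rw [if_neg (by omega)] at this
      exact this
    · have := h ⟨ℓ, hℓ⟩ (by simp)
      rwa [if_pos rfl] at this
  · rintro ⟨h1, h2⟩ i hi
    by_cases hie : (i : ℕ) = ℓ
    · rw [if_pos hie]
      have : i = ⟨ℓ, hℓ⟩ := Fin.ext hie
      rw [this]; exact h2
    · rw [if_neg hie]; exact h1 i (by omega)

lemma card_pB {ℓ : ℕ} (hℓ : ℓ ≤ k) (τ : Fin k → Bool) :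
    (pB k ℓ τ).card = 2 ^ (k - ℓ) := by
  induction' hd : k - ℓ with d ih generalizing ℓ τ
  · have : ℓ = k := by omega
    subst this
    rw [pB_top]; simp
  · have hlt : ℓ < k := by omega
    have hdisj : Disjoint (pB k (ℓ+1) (ext1 τ ℓ false)) (pB k (ℓ+1) (ext1 τ ℓ true)) := by
      rw [Finset.disjoint_left]
      intro σ h0 h1
      have e0 := ((mem_pB_ext1 hlt).1 h0).2
      have e1 := ((mem_pB_ext1 hlt).1 h1).2
      rw [e0] at e1; exact absurd e1 (by simp)
    have hunion : pB k ℓ τ = pB k (ℓ+1) (ext1 τ ℓ false) ∪ pB k (ℓ+1) (ext1 τ ℓ true) := by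
      ext σ
      simp only [Finset.mem_union, mem_pB_ext1 hlt]
      cases h : σ ⟨ℓ, hlt⟩ <;> tauto
    rw [hunion, Finset.card_union_of_disjoint hdisj,
      ih (by omega) _ (by omega), ih (by omega) _ (by omega)]
    have : k - ℓ = d + 1 := hd
    rw [pow_succ]; omega


lemma blk_unique {π : Finset (Finset (Fin k → Bool))} (hπ : IsBlockPartition π)
    {C D : Finset (Fin k → Bool)} {x : Fin k → Bool}
    (hC : C ∈ π) (hD : D ∈ π) (hxC : x ∈ C) (hxD : x ∈ D) : C = D := by
  by_contra hne
  exact (Finset.disjoint_left.1 (hπ.2.1 C hC D hD hne)) hxC hxD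

lemma images_same_block {π : Finset (Finset (Fin k → Bool))} (hπ : IsBlockPartition π)
    {ℓ : ℕ} {τ s t : Fin k → Bool} (hB : pB k ℓ τ ∈ π)
    (hs : s ∈ pB k ℓ τ) (ht : t ∈ pB k ℓ τ)
    (hag : ∀ i : Fin k, (i : ℕ) ≤ ℓ → s i = t i) (a : Fin (k - 1)) :
    inSameBlock π (bsStep s a) (bsStep t a) := by
  have hak : (a : ℕ) + 1 < k := by have := a.isLt; omega
  rw [mem_pB] at hs ht
  unfold bsStep
  split_ifs with h1 h2 h2
  · exact ⟨pB k ℓ τ, hB, mem_pB.2 hs, mem_pB.2 ht⟩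
  · -- s stays, t flips: bit a+1 differs, so a+1 > ℓ, so ℓ ≤ a
    have hgt : ℓ ≤ (a : ℕ) := by
      by_contra hle
      have := hag ⟨(a : ℕ) + 1, hak⟩ (by simp; omega)
      rw [h1] at this
      exact h2 this.symm
    refine ⟨pB k ℓ τ, hB, mem_pB.2 hs, mem_pB.2 fun i hi => ?_⟩
    have h1' : (i : ℕ) < (a : ℕ) := by omega
    simp only [if_pos h1']
    exact ht i hi
  · have hgt : ℓ ≤ (a : ℕ) := by
      by_contra hle
      have := hag ⟨(a : ℕ) + 1, hak⟩ (by simp; omega)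
      rw [h2] at this
      exact h1 this
    refine ⟨pB k ℓ τ, hB, mem_pB.2 fun i hi => ?_, mem_pB.2 ht⟩
    have h1' : (i : ℕ) < (a : ℕ) := by omega
    simp only [if_pos h1']
    exact hs i hi
  · -- both flip
    by_cases hcase : ℓ ≤ (a : ℕ)
    · refine ⟨pB k ℓ τ, hB, mem_pB.2 fun i hi => ?_, mem_pB.2 fun i hi => ?_⟩ <;>
        [skip; skip] <;>
        · have h1' : (i : ℕ) < (a : ℕ) := by omega
          simp only [if_pos h1']
          first
            | exact hs i hi
            | exact ht i hi
    · have heq : (fun p : Fin k => if (p : ℕ) < (a : ℕ) then s p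
          else if (p : ℕ) = (a : ℕ) then !(s p) else false) =
          (fun p : Fin k => if (p : ℕ) < (a : ℕ) then t p
          else if (p : ℕ) = (a : ℕ) then !(t p) else false) := by
        funext p
        by_cases hp1 : (p : ℕ) < (a : ℕ)
        · simp only [if_pos hp1]; exact hag p (by omega)
        · simp only [if_neg hp1]
          by_cases hp2 : (p : ℕ) = (a : ℕ)
          · simp only [if_pos hp2, hag p (by omega)]
          · simp only [if_neg hp2]
      rw [heq]
      obtain ⟨C, hC, hx⟩ := hπ.2.2 (fun p : Fin k => if (p : ℕ) < (a : ℕ) then t p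
          else if (p : ℕ) = (a : ℕ) then !(t p) else false)
      exact ⟨C, hC, hx, hx⟩

lemma splitWitness_iff {π : Finset (Finset (Fin k → Bool))} {s t : Fin k → Bool} :
    SplitWitness (bisplitter k) π s t ↔
      ∃ a, ¬ inSameBlock π (bsStep s a) (bsStep t a) := by
  constructor
  · rintro ⟨a, s', hs', h⟩
    have hs'' : s' = bsStep s a := hs'
    exact ⟨a, hs'' ▸ h (bsStep t a) rfl⟩
  · rintro ⟨a, h⟩
    exact ⟨a, bsStep s a, rfl, fun t' ht' => by
      have : t' = bsStep t a := ht'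
      rw [this]; exact h⟩

lemma splitWitness_of_bit {π : Finset (Finset (Fin k → Bool))} (hπ : IsBlockPartition π)
    {ℓ : ℕ} {τ s t : Fin k → Bool} (hB : pB k ℓ τ ∈ π) (h1 : 1 ≤ ℓ) (hk : ℓ < k)
    (hs : s ∈ pB k ℓ τ) (ht : t ∈ pB k ℓ τ)
    (hsb : s ⟨ℓ, hk⟩ = true) (htb : t ⟨ℓ, hk⟩ = false) :
    SplitWitness (bisplitter k) π s t := by
  rw [splitWitness_iff]
  refine ⟨⟨ℓ - 1, by omega⟩, ?_⟩
  have hℓk : ℓ - 1 < k := by omega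
  have hidx : (⟨(ℓ - 1 : ℕ) + 1, by omega⟩ : Fin k) = ⟨ℓ, hk⟩ := Fin.ext (by simp; omega)
  have hts : bsStep t ⟨ℓ - 1, by omega⟩ = t := by
    unfold bsStep
    rw [if_pos]
    show t ⟨(ℓ - 1 : ℕ) + 1, _⟩ = false
    rw [show (⟨(ℓ - 1 : ℕ) + 1, by omega⟩ : Fin k) = ⟨ℓ, hk⟩ from Fin.ext (by simp; omega)]
    exact htb
  have hss : bsStep s ⟨ℓ - 1, by omega⟩ ⟨ℓ - 1, hℓk⟩ = !(s ⟨ℓ - 1, hℓk⟩) := by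
    unfold bsStep
    rw [if_neg]
    · simp
    · rw [show (⟨(ℓ - 1 : ℕ) + 1, by omega⟩ : Fin k) = ⟨ℓ, hk⟩ from Fin.ext (by simp; omega)]
      rw [hsb]; simp
  rw [hts]
  rintro ⟨C, hC, hfC, htC⟩
  have hCB : C = pB k ℓ τ := blk_unique hπ hC hB htC ht
  subst hCB
  have hv := (mem_pB.1 hfC) ⟨ℓ - 1, hℓk⟩ (by simp; omega)
  rw [hss] at hv
  have hsv := (mem_pB.1 hs) ⟨ℓ - 1, hℓk⟩ (by simp; omega)
  rw [hsv] at hv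
  exact absurd hv (by cases τ ⟨ℓ - 1, hℓk⟩ <;> simp)

def IsPP (k : ℕ) (π : Finset (Finset (Fin k → Bool))) : Prop :=
  ∀ B ∈ π, ∃ ℓ τ, 1 ≤ ℓ ∧ ℓ ≤ k ∧ B = pB k ℓ τ

lemma same_block' {π π' : Finset (Finset (Fin k → Bool))}
    (hπ : IsBlockPartition π) (hvr : ValidRefinement (bisplitter k) π π')
    {ℓ : ℕ} {τ s t : Fin k → Bool} (hB : pB k ℓ τ ∈ π)
    (hs : s ∈ pB k ℓ τ) (ht : t ∈ pB k ℓ τ)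
    (hag : ∀ i : Fin k, (i : ℕ) ≤ ℓ → s i = t i) :
    inSameBlock π' s t := by
  by_contra h
  rcases hvr.2.2 s t h with hsep | hw | hw
  · exact hsep ⟨pB k ℓ τ, hB, hs, ht⟩
  · obtain ⟨a, hna⟩ := splitWitness_iff.1 hw
    exact hna (images_same_block hπ hB hs ht hag a)
  · obtain ⟨a, hna⟩ := splitWitness_iff.1 hw
    exact hna (images_same_block hπ hB ht hs (fun i hi => (hag i hi).symm) a)

lemma step_blocks {π π' : Finset (Finset (Fin k → Bool))}
    (hπ : IsBlockPartition π) (hπ' : IsBlockPartition π')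
    (hvr : ValidRefinement (bisplitter k) π π')
    {ℓ : ℕ} {τ : Fin k → Bool} (hℓk : ℓ ≤ k) (hB : pB k ℓ τ ∈ π) :
    π'.filter (· ⊆ pB k ℓ τ) = {pB k ℓ τ} ∨
    (ℓ < k ∧ π'.filter (· ⊆ pB k ℓ τ) =
      {pB k (ℓ + 1) (ext1 τ ℓ false), pB k (ℓ + 1) (ext1 τ ℓ true)}) := by
  have hsub1 : ∀ C ∈ π', ∀ x ∈ C, x ∈ pB k ℓ τ → C ⊆ pB k ℓ τ := by
    intro C hC x hxC hxB
    obtain ⟨B'', hB'', hCB''⟩ := hvr.1 C hC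
    have : B'' = pB k ℓ τ := blk_unique hπ hB'' hB (hCB'' hxC) hxB
    rwa [this] at hCB''
  by_cases hlt : ℓ < k
  · -- children blocks
    set F : Bool → Finset (Fin k → Bool) := fun b => pB k (ℓ + 1) (ext1 τ ℓ b) with hF
    have hFB : ∀ b, F b ⊆ pB k ℓ τ := fun b x hx => ((mem_pB_ext1 hlt).1 hx).1
    have hrF : ∀ b, ext1 τ ℓ b ∈ F b := fun b => self_mem_pB
    have hrbit : ∀ b, (ext1 τ ℓ b) ⟨ℓ, hlt⟩ = b := fun b => by simp [ext1]
    obtain ⟨C0, hC0, hr0⟩ := hπ'.2.2 (ext1 τ ℓ false)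
    obtain ⟨C1, hC1, hr1⟩ := hπ'.2.2 (ext1 τ ℓ true)
    set C : Bool → Finset (Fin k → Bool) := fun b => bif b then C1 else C0 with hCdef
    have hCπ : ∀ b, C b ∈ π' := by rintro (_|_) <;> assumption
    have hrC : ∀ b, ext1 τ ℓ b ∈ C b := by rintro (_|_) <;> assumption
    have hFC : ∀ b, F b ⊆ C b := by
      intro b x hx
      obtain ⟨hx1, hx2⟩ := (mem_pB_ext1 hlt).1 hx
      have hag : ∀ i : Fin k, (i : ℕ) ≤ ℓ → x i = ext1 τ ℓ b i := by
        intro i hi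
        rcases lt_or_eq_of_le hi with hi' | hi'
        · rw [show ext1 τ ℓ b i = τ i from by simp [ext1]; omega]
          exact mem_pB.1 hx1 i hi'
        · have : i = ⟨ℓ, hlt⟩ := Fin.ext hi'
          rw [this, hx2, hrbit b]
      obtain ⟨D, hD, hxD, hrD⟩ :=
        same_block' hπ hvr hB hx1 (hFB b (hrF b)) hag
      rwa [blk_unique hπ' hD (hCπ b) hrD (hrC b)] at hxD
    have hCB : ∀ b, C b ⊆ pB k ℓ τ :=
      fun b => hsub1 (C b) (hCπ b) (ext1 τ ℓ b) (hrC b) (hFB b (hrF b))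
    have hmemF : ∀ x ∈ pB k ℓ τ, x ∈ F (x ⟨ℓ, hlt⟩) :=
      fun x hx => (mem_pB_ext1 hlt).2 ⟨hx, rfl⟩
    by_cases hCC : C false = C true
    · left
      have hBC : pB k ℓ τ = C false := by
        apply Finset.Subset.antisymm
        · intro x hx
          have := hFC (x ⟨ℓ, hlt⟩) (hmemF x hx)
          cases hb : x ⟨ℓ, hlt⟩
          · rwa [hb] at this
          · rw [hb] at this; rwa [hCC]
        · exact hCB false
      ext D
      simp only [Finset.mem_filter, Finset.mem_singleton]
      constructor
      · rintro ⟨hD, hDB⟩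
        obtain ⟨x, hx⟩ := Finset.nonempty_iff_ne_empty.2 (fun he => hπ'.1 (he ▸ hD))
        have hxB : x ∈ C false := hBC ▸ hDB hx
        rw [blk_unique hπ' hD (hCπ false) hx hxB, hBC]
      · rintro rfl
        exact ⟨hBC ▸ hCπ false, le_refl _⟩
    · right
      refine ⟨hlt, ?_⟩
      have hdisj : Disjoint (C false) (C true) :=
        hπ'.2.1 _ (hCπ false) _ (hCπ true) hCC
      have hCF : ∀ b, C b = F b := by
        intro b
        apply Finset.Subset.antisymm _ (hFC b)
        intro x hx
        have hxB : x ∈ pB k ℓ τ := hCB b hx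
        have hxF := hmemF x hxB
        by_cases hb : x ⟨ℓ, hlt⟩ = b
        · rwa [hb] at hxF
        · exfalso
          have hxC' : x ∈ C (x ⟨ℓ, hlt⟩) := hFC _ hxF
          cases b <;> cases hb' : x ⟨ℓ, hlt⟩ <;> simp_all
          · exact Finset.disjoint_left.1 hdisj hx (by simpa [hb'] using hxC')
          · exact Finset.disjoint_left.1 hdisj (by simpa [hb'] using hxC') hx
      ext D
      simp only [Finset.mem_filter, Finset.mem_insert, Finset.mem_singleton]
      constructor
      · rintro ⟨hD, hDB⟩
        obtain ⟨x, hx⟩ := Finset.nonempty_iff_ne_empty.2 (fun he => hπ'.1 (he ▸ hD))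
        have hxF := hmemF x (hDB hx)
        have hxC : x ∈ C (x ⟨ℓ, hlt⟩) := hFC _ hxF
        have hDC : D = C (x ⟨ℓ, hlt⟩) := blk_unique hπ' hD (hCπ _) hx hxC
        cases hb : x ⟨ℓ, hlt⟩
        · left; rw [hDC, hb, hCF]
        · right; rw [hDC, hb, hCF]
      · rintro (rfl | rfl)
        · refine ⟨?_, hFB false⟩
          have h := hCπ false; rw [hCF false, hF] at h; exact h
        · refine ⟨?_, hFB true⟩
          have h := hCπ true; rw [hCF true, hF] at h; exact h
  · -- ℓ = k : singleton block
    left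
    have hk' : ℓ = k := by omega
    subst hk'
    rw [pB_top] at hB hsub1 ⊢
    ext D
    simp only [Finset.mem_filter, Finset.mem_singleton]
    constructor
    · rintro ⟨hD, hDB⟩
      obtain ⟨x, hx⟩ := Finset.nonempty_iff_ne_empty.2 (fun he => hπ'.1 (he ▸ hD))
      have hxτ : x = τ := Finset.mem_singleton.1 (hDB hx)
      subst hxτ
      obtain ⟨E, hE, hxE⟩ := hπ'.2.2 x
      apply Finset.Subset.antisymm hDB
      intro y hy
      have hyτ : y = x := Finset.mem_singleton.1 hy
      subst hyτ
      exact hx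
    · rintro rfl
      obtain ⟨E, hE, hxE⟩ := hπ'.2.2 τ
      have hEτ : E ⊆ {τ} := hsub1 E hE τ hxE (Finset.mem_singleton_self τ)
      have : E = {τ} := Finset.Subset.antisymm hEτ (Finset.singleton_subset_iff.2 hxE)
      exact ⟨this ▸ hE, le_refl _⟩

def phiB (B : Finset (Fin k → Bool)) : ℕ := B.card * Nat.log 2 B.card / 2

def Phi (π : Finset (Finset (Fin k → Bool))) : ℕ := ∑ B ∈ π, phiB B

lemma phi_pow (m : ℕ) : 2 ^ m * Nat.log 2 (2 ^ m) / 2 = m * 2 ^ (m - 1) := by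
  rw [Nat.log_pow one_lt_two]
  cases m with
  | zero => simp
  | succ d =>
    rw [pow_succ]
    simp only [Nat.add_sub_cancel]
    rw [Nat.mul_comm (2 ^ d) 2, Nat.mul_assoc, Nat.mul_div_cancel_left _ two_pos]
    ring

lemma phiB_pB {ℓ : ℕ} (hℓ : ℓ ≤ k) (τ : Fin k → Bool) :
    phiB (pB k ℓ τ) = (k - ℓ) * 2 ^ (k - ℓ - 1) := by
  rw [phiB, card_pB hℓ, phi_pow]

lemma step_cost {π π' : Finset (Finset (Fin k → Bool))}
    (hπ : IsBlockPartition π) (hπ' : IsBlockPartition π')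
    (hvr : ValidRefinement (bisplitter k) π π') (hPP : IsPP k π) :
    IsPP k π' ∧ IRCstep π π' + Phi π' = Phi π := by
  have hnonempty : ∀ C ∈ π', C.Nonempty := fun C hC =>
    Finset.nonempty_iff_ne_empty.2 (fun he => hπ'.1 (he ▸ hC))
  -- π' is the disjoint union of the filters
  have hbi : π' = π.biUnion (fun B => π'.filter (· ⊆ B)) := by
    ext C
    simp only [Finset.mem_biUnion, Finset.mem_filter]
    constructor
    · intro hC
      obtain ⟨B, hBπ, hCB⟩ := hvr.1 C hC
      exact ⟨B, hBπ, hC, hCB⟩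
    · rintro ⟨B, _, hC, _⟩; exact hC
  have hpd : (↑π : Set (Finset (Fin k → Bool))).PairwiseDisjoint
      (fun B => π'.filter (· ⊆ B)) := by
    intro B hBm B' hBm' hne
    simp only [Function.onFun]
    rw [Finset.disjoint_left]
    intro C hC hC'
    simp only [Finset.mem_filter] at hC hC'
    obtain ⟨x, hx⟩ := hnonempty C hC.1
    exact Finset.disjoint_left.1 (hπ.2.1 B hBm B' hBm' hne) (hC.2 hx) (hC'.2 hx)
  -- per-block analysis
  have hblk : ∀ B ∈ π, (∀ C ∈ π'.filter (· ⊆ B), ∃ ℓ τ, 1 ≤ ℓ ∧ ℓ ≤ k ∧ C = pB k ℓ τ) ∧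
      (B.card - (π'.filter (· ⊆ B)).sup Finset.card)
        + ∑ C ∈ π'.filter (· ⊆ B), phiB C = phiB B := by
    intro B hBπ
    obtain ⟨ℓ, τ, hℓ1, hℓk, rfl⟩ := hPP B hBπ
    rcases step_blocks hπ hπ' hvr hℓk hBπ with hfil | ⟨hlt, hfil⟩
    · rw [hfil]
      refine ⟨?_, ?_⟩
      · intro C hC
        rw [Finset.mem_singleton] at hC
        exact ⟨ℓ, τ, hℓ1, hℓk, hC⟩
      · rw [Finset.sup_singleton, Finset.sum_singleton, Nat.sub_self, Nat.zero_add]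
    · rw [hfil]
      have hne : pB k (ℓ+1) (ext1 τ ℓ false) ≠ pB k (ℓ+1) (ext1 τ ℓ true) := by
        intro he
        have h0 : ext1 τ ℓ false ∈ pB k (ℓ+1) (ext1 τ ℓ true) := he ▸ self_mem_pB
        have := ((mem_pB_ext1 hlt).1 h0).2
        simp [ext1] at this
      have hc0 : (pB k (ℓ+1) (ext1 τ ℓ false)).card = 2 ^ (k - (ℓ+1)) :=
        card_pB (by omega) _
      have hc1 : (pB k (ℓ+1) (ext1 τ ℓ true)).card = 2 ^ (k - (ℓ+1)) :=
        card_pB (by omega) _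
      refine ⟨?_, ?_⟩
      · intro C hC
        rw [Finset.mem_insert, Finset.mem_singleton] at hC
        rcases hC with rfl | rfl
        · exact ⟨ℓ+1, ext1 τ ℓ false, by omega, by omega, rfl⟩
        · exact ⟨ℓ+1, ext1 τ ℓ true, by omega, by omega, rfl⟩
      · rw [Finset.sup_insert, Finset.sup_singleton, Finset.sum_insert (by
          simpa using hne), Finset.sum_singleton]
        rw [phiB_pB (show ℓ+1 ≤ k by omega) (ext1 τ ℓ false),
          phiB_pB (show ℓ+1 ≤ k by omega) (ext1 τ ℓ true),
          phiB_pB hℓk τ, card_pB hℓk, hc0, hc1]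
        have hm : 1 ≤ k - ℓ := by omega
        set m := k - ℓ with hmdef
        have he1 : k - (ℓ + 1) = m - 1 := by omega
        rw [he1, sup_idem]
        rcases Nat.exists_eq_add_of_le hm with ⟨d, hd⟩
        rw [hd]
        cases d with
        | zero => simp
        | succ e =>
          have h1 : (1 + (e+1) : ℕ) - 1 = e + 1 := by omega
          have h2 : (e + 1 : ℕ) - 1 = e := by omega
          rw [h1, h2]
          have h3 : (2 : ℕ) ^ (1 + (e+1)) - 2 ^ (e+1) = 2 ^ (e+1) := by
            rw [show 1 + (e+1) = (e+1) + 1 from by omega, pow_succ]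
            omega
          rw [h3, pow_succ]
          ring
  -- assemble
  constructor
  · intro C hC
    obtain ⟨B, hBπ, hCB⟩ := hvr.1 C hC
    exact (hblk B hBπ).1 C (Finset.mem_filter.2 ⟨hC, hCB⟩)
  · have hPhi' : Phi π' = ∑ B ∈ π, ∑ C ∈ π'.filter (· ⊆ B), phiB C := by
      rw [Phi]
      conv_lhs => rw [hbi]
      rw [Finset.sum_biUnion hpd]
    rw [IRCstep, hPhi', ← Finset.sum_add_distrib]
    exact Finset.sum_congr rfl fun B hB => (hblk B hB).2

lemma stable_singletons {π : Finset (Finset (Fin k → Bool))}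
    (hπ : IsBlockPartition π) (hst : IsStablePartition (bisplitter k) π)
    {ℓ : ℕ} {τ : Fin k → Bool} (h1 : 1 ≤ ℓ) (hℓk : ℓ ≤ k) (hB : pB k ℓ τ ∈ π) :
    ℓ = k := by
  by_contra hne
  have hlt : ℓ < k := by omega
  have hsmem : ext1 τ ℓ true ∈ pB k ℓ τ := ((mem_pB_ext1 hlt).1 self_mem_pB).1
  have htmem : ext1 τ ℓ false ∈ pB k ℓ τ := ((mem_pB_ext1 hlt).1 self_mem_pB).1
  have hw := splitWitness_of_bit hπ hB h1 hlt hsmem htmem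
    (by simp [ext1]) (by simp [ext1])
  obtain ⟨a, hna⟩ := splitWitness_iff.1 hw
  obtain ⟨C, hC, huC⟩ := hπ.2.2 (bsStep (ext1 τ ℓ true) a)
  rcases hst _ hB _ hC a with hall | hnone
  · obtain ⟨x, hxC, hxtr⟩ := hall (ext1 τ ℓ false) htmem
    have : x = bsStep (ext1 τ ℓ false) a := hxtr
    subst this
    exact hna ⟨C, hC, huC, hxC⟩
  · exact hnone (ext1 τ ℓ true) hsmem ⟨_, huC, rfl⟩

lemma Phi_stable_zero {π : Finset (Finset (Fin k → Bool))}
    (hπ : IsBlockPartition π) (hst : IsStablePartition (bisplitter k) π)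
    (hPP : IsPP k π) : Phi π = 0 := by
  rw [Phi]
  apply Finset.sum_eq_zero
  intro B hB
  obtain ⟨ℓ, τ, hℓ1, hℓk, rfl⟩ := hPP B hB
  have := stable_singletons hπ hst hℓ1 hℓk hB
  subst this
  rw [phiB_pB le_rfl]
  simp

lemma prefixBlock_eq_pB (hk : 0 < k) (b : Bool) :
    prefixBlock k [b] = pB k 1 (fun _ => b) := by
  ext σ
  simp only [prefixBlock, pB, Finset.mem_filter, Finset.mem_univ, true_and]
  constructor
  · rintro ⟨l, hl⟩ i hi
    have hi0 : i = ⟨0, hk⟩ := Fin.ext (show (i : ℕ) = 0 by omega)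
    subst hi0
    have h0 : (List.ofFn σ)[0]'(by rw [List.length_ofFn]; exact hk) = σ ⟨0, hk⟩ :=
      List.getElem_ofFn _
    simp only [← hl] at h0
    simpa using h0.symm
  · intro h
    refine ⟨(List.ofFn σ).drop 1, ?_⟩
    have h1 : [b] = (List.ofFn σ).take 1 := by
      have hlen : (List.ofFn σ).length = k := List.length_ofFn
      have hne : List.ofFn σ ≠ [] := by
        intro he; rw [he] at hlen; simp at hlen; omega
      rcases he : List.ofFn σ with _ | ⟨x, l⟩
      · exact absurd he hne
      · have hx : x = σ ⟨0, hk⟩ := by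
          have h0 : (List.ofFn σ)[0]'(by rw [List.length_ofFn]; exact hk) = σ ⟨0, hk⟩ :=
            List.getElem_ofFn _
          simp only [he] at h0
          simpa using h0
        simp [hx, h ⟨0, hk⟩ (by simp)]
    rw [h1, List.take_append_drop]

lemma init_eq_pB (hk : 0 < k) :
    (bisplitter k).init = {pB k 1 (fun _ => false), pB k 1 (fun _ => true)} := by
  show ({prefixBlock k [false], prefixBlock k [true]} : Finset _) = _
  rw [prefixBlock_eq_pB hk false, prefixBlock_eq_pB hk true]

lemma pB_one_ne (hk : 0 < k) :
    pB k 1 (fun _ => false) ≠ pB k 1 (fun _ => true) := by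
  intro he
  have h0 : (fun _ : Fin k => false) ∈ pB k 1 (fun _ => true) := he ▸ self_mem_pB
  have := mem_pB.1 h0 ⟨0, hk⟩ (by simp)
  simp at this

lemma IsPP_init (hk : 0 < k) : IsPP k (bisplitter k).init := by
  rw [init_eq_pB hk]
  intro B hB
  rw [Finset.mem_insert, Finset.mem_singleton] at hB
  rcases hB with rfl | rfl
  · exact ⟨1, fun _ => false, le_rfl, hk, rfl⟩
  · exact ⟨1, fun _ => true, le_rfl, hk, rfl⟩

lemma Phi_init (hk : 1 < k) :
    Phi (bisplitter k).init = (k - 1) * 2 ^ (k - 1) := by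
  have hk0 : 0 < k := by omega
  rw [init_eq_pB hk0, Phi, Finset.sum_pair (pB_one_ne hk0),
    phiB_pB hk0 (fun _ => false), phiB_pB hk0 (fun _ => true)]
  have h1 : k - 1 = (k - 2) + 1 := by omega
  have h2 : k - 1 - 1 = k - 2 := by omega
  rw [h2, h1, pow_succ]
  ring

/-! ### The canonical refinement sequence -/

def canon (k : ℕ) (i : ℕ) : Finset (Finset (Fin k → Bool)) :=
  Finset.univ.image fun τ => pB k (min (i + 1) k) τ

lemma canon_blockPartition (i : ℕ) : IsBlockPartition (canon k i) := by
  refine ⟨?_, ?_, ?_⟩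
  · intro hmem
    simp only [canon, Finset.mem_image] at hmem
    obtain ⟨τ, _, hτ⟩ := hmem
    have : τ ∈ (∅ : Finset (Fin k → Bool)) := hτ ▸ self_mem_pB
    simp at this
  · intro B hB B' hB' hne
    simp only [canon, Finset.mem_image] at hB hB'
    obtain ⟨τ, _, rfl⟩ := hB
    obtain ⟨τ', _, rfl⟩ := hB'
    rw [Finset.disjoint_left]
    intro x hx hx'
    exact hne ((pB_eq_of_mem hx).symm.trans (pB_eq_of_mem hx'))
  · intro s
    exact ⟨pB k (min (i + 1) k) s, by simp [canon], self_mem_pB⟩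

lemma canon_zero (hk : 0 < k) : canon k 0 = (bisplitter k).init := by
  rw [init_eq_pB hk]
  have hmin : min (0 + 1) k = 1 := by omega
  ext B
  simp only [canon, hmin, Finset.mem_image, Finset.mem_univ, true_and,
    Finset.mem_insert, Finset.mem_singleton]
  constructor
  · rintro ⟨τ, rfl⟩
    have : pB k 1 τ = pB k 1 (fun _ => τ ⟨0, hk⟩) := by
      ext σ
      simp only [mem_pB]
      constructor <;> intro h i hi <;>
        · have : i = ⟨0, hk⟩ := Fin.ext (show (i : ℕ) = 0 by omega)
          subst this
          simpa using h ⟨0, hk⟩ (by simp)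
    rw [this]
    cases τ ⟨0, hk⟩
    · exact Or.inl rfl
    · exact Or.inr rfl
  · rintro (rfl | rfl)
    · exact ⟨fun _ => false, rfl⟩
    · exact ⟨fun _ => true, rfl⟩

lemma canon_valid (i : ℕ) (hi : i < k - 1) :
    ValidRefinement (bisplitter k) (canon k i) (canon k (i + 1)) := by
  have hlt : i + 1 < k := by omega
  have hmin1 : min (i + 1) k = i + 1 := by omega
  have hmin2 : min (i + 1 + 1) k = i + 2 := by omega
  refine ⟨?_, ?_, ?_⟩
  · -- refines
    intro B' hB'
    simp only [canon, hmin2, Finset.mem_image, Finset.mem_univ, true_and] at hB'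
    obtain ⟨τ, rfl⟩ := hB'
    exact ⟨pB k (i + 1) τ, by simp [canon, hmin1], pB_mono (by omega) τ⟩
  · -- strict
    intro he
    have hmem : pB k (i + 2) (fun _ => false) ∈ canon k i := by
      rw [← he]
      simp only [canon, hmin2, Finset.mem_image, Finset.mem_univ, true_and]
      exact ⟨fun _ => false, rfl⟩
    simp only [canon, hmin1, Finset.mem_image, Finset.mem_univ, true_and] at hmem
    obtain ⟨τ, hτ⟩ := hmem
    have hc1 : (pB k (i + 1) τ).card = 2 ^ (k - (i + 1)) := card_pB (by omega) τ
    have hc2 : (pB k (i + 2) (fun _ => false)).card = 2 ^ (k - (i + 2)) :=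
      card_pB (by omega) _
    rw [← hτ, hc1] at hc2
    have := Nat.pow_lt_pow_right (one_lt_two) (show k - (i+2) < k - (i+1) by omega)
    omega
  · -- separation witnessed
    intro s t hnot
    by_cases hsame : inSameBlock (canon k i) s t
    · obtain ⟨B, hB, hsB, htB⟩ := hsame
      simp only [canon, hmin1, Finset.mem_image, Finset.mem_univ, true_and] at hB
      obtain ⟨τ, rfl⟩ := hB
      have hBmem : pB k (i + 1) τ ∈ canon k i := by
        simp only [canon, hmin1, Finset.mem_image, Finset.mem_univ, true_and]
        exact ⟨τ, rfl⟩
      by_cases hbit : s ⟨i + 1, hlt⟩ = t ⟨i + 1, hlt⟩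
      · exfalso
        apply hnot
        refine ⟨pB k (i + 2) s, ?_, self_mem_pB, mem_pB.2 fun j hj => ?_⟩
        · simp only [canon, hmin2, Finset.mem_image, Finset.mem_univ, true_and]
          exact ⟨s, rfl⟩
        · rcases Nat.lt_or_ge (j : ℕ) (i + 1) with hj' | hj'
          · rw [mem_pB] at hsB htB
            rw [htB j hj', hsB j hj']
          · have : j = ⟨i + 1, hlt⟩ := Fin.ext (show (j : ℕ) = i + 1 by omega)
            subst this
            exact hbit.symm
      · cases hsbit : s ⟨i + 1, hlt⟩
        · have htbit : t ⟨i + 1, hlt⟩ = true := by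
            cases htb : t ⟨i + 1, hlt⟩
            · rw [hsbit, htb] at hbit; simp at hbit
            · rfl
          exact Or.inr (Or.inr (splitWitness_of_bit (canon_blockPartition i) hBmem
            (by omega) hlt htB hsB htbit hsbit))
        · have htbit : t ⟨i + 1, hlt⟩ = false := by
            cases htb : t ⟨i + 1, hlt⟩
            · rfl
            · rw [hsbit, htb] at hbit; simp at hbit
          exact Or.inr (Or.inl (splitWitness_of_bit (canon_blockPartition i) hBmem
            (by omega) hlt hsB htB hsbit htbit))
    · exact Or.inl hsame

lemma canon_stable (hk : 0 < k) : IsStablePartition (bisplitter k) (canon k (k - 1)) := by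
  intro B hB C _
  have hmin : min (k - 1 + 1) k = k := by omega
  simp only [canon, hmin, Finset.mem_image, Finset.mem_univ, true_and] at hB
  obtain ⟨τ, rfl⟩ := hB
  intro a
  by_cases hr : ReachesSet (bisplitter k) τ a C
  · left
    intro s hs
    have : s = τ := by
      rw [pB_top, Finset.mem_singleton] at hs; exact hs
    rwa [this]
  · right
    intro s hs
    have : s = τ := by
      rw [pB_top, Finset.mem_singleton] at hs; exact hs
    rwa [this]

lemma canon_validSeq (hk : 1 < k) :
    ValidRefinementSeq (bisplitter k) (k - 1) (canon k) := by
  refine ⟨canon_zero (by omega), fun i _ => canon_blockPartition i,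
    fun i hi => canon_valid i hi, canon_stable (by omega)⟩

/-! ### The universal cost lemma -/

lemma cost_univ (hk : 1 < k) (n : ℕ) (seq : ℕ → Finset (Finset (Fin k → Bool)))
    (hseq : ValidRefinementSeq (bisplitter k) n seq) :
    IRCseq n seq = (k - 1) * 2 ^ (k - 1) := by
  obtain ⟨h0, hbp, hvr, hst⟩ := hseq
  have hPP : ∀ i ≤ n, IsPP k (seq i) := by
    intro i hi
    induction i with
    | zero => rw [h0]; exact IsPP_init (by omega)
    | succ j ih =>
      have hj : j ≤ n := by omega
      exact (step_cost (hbp j hj) (hbp (j + 1) hi) (hvr j (by omega)) (ih hj)).1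
  have htel : ∀ j, j ≤ n → IRCseq j seq + Phi (seq j) = Phi (seq 0) := by
    intro j hj
    induction j with
    | zero => simp [IRCseq]
    | succ m ih =>
      have hm : m ≤ n := by omega
      have hstep := (step_cost (hbp m hm) (hbp (m + 1) hj) (hvr m (by omega))
        (hPP m hm)).2
      have hprev := ih hm
      rw [IRCseq, Finset.sum_range_succ] at *
      omega
  have hfin : Phi (seq n) = 0 := Phi_stable_zero (hbp n le_rfl) hst (hPP n le_rfl)
  have h00 : Phi (seq 0) = (k - 1) * 2 ^ (k - 1) := by rw [h0]; exact Phi_init hk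
  have := htel n le_rfl
  rw [hfin, h00] at this
  omega

end BsplAux

/-- For k > 1, every valid refinement sequence for the bisplitter `B_k` has
refinement cost exactly `(k-1)·2^(k-1)`; hence `IRC(B_k) = (k-1)·2^(k-1)`, which with
`n = 2^k` states equals `(n/2)·log₂(n/2)`, i.e. `Ω(n log n)`. -/
theorem bisplitter_refinement_cost
    (k : ℕ) (hk : 1 < k) :
    (∀ (n : ℕ) (seq : ℕ → Finset (Finset (Fin k → Bool))),
        ValidRefinementSeq (bisplitter k) n seq →
        IRCseq n seq = (k - 1) * 2 ^ (k - 1)) ∧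
    IRC (bisplitter k) = (k - 1) * 2 ^ (k - 1) ∧
    IRC (bisplitter k) = 2 ^ k / 2 * Nat.log 2 (2 ^ k / 2) := by
  have huniv := fun n seq h => BsplAux.cost_univ hk n seq h
  have hIRC : IRC (bisplitter k) = (k - 1) * 2 ^ (k - 1) := by
    have hmem : (k - 1) * 2 ^ (k - 1) ∈
        {c | ∃ n seq, ValidRefinementSeq (bisplitter k) n seq ∧ IRCseq n seq = c} :=
      ⟨k - 1, BsplAux.canon k, BsplAux.canon_validSeq hk,
        huniv (k - 1) (BsplAux.canon k) (BsplAux.canon_validSeq hk)⟩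
    refine le_antisymm (Nat.sInf_le hmem) (le_csInf ⟨_, hmem⟩ ?_)
    rintro b ⟨n, seq, hv, rfl⟩
    exact le_of_eq (huniv n seq hv).symm
  refine ⟨huniv, hIRC, ?_⟩
  rw [hIRC]
  have h2 : 2 ^ k / 2 = 2 ^ (k - 1) := by
    have : (2 : ℕ) ^ k = 2 ^ (k - 1) * 2 := by
      rw [← pow_succ]; congr 1; omega
    rw [this, Nat.mul_div_cancel _ two_pos]
  rw [h2, Nat.log_pow one_lt_two, mul_comm]
end

section
/- For every k ≥ 1, two states of the bisplitter B_k are bisimilar if and only if they are equal; equivalently, the last (stable) partition of every valid refinement sequence for B_k is the partition of Bit^k into singletons. -/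
/-! ### Auxiliary lemmas for the bisplitter -/

lemma aux_mem_prefixBlock {k : ℕ} (hk : 0 < k) (b : Bool) (σ : Fin k → Bool) :
    σ ∈ prefixBlock k [b] ↔ σ ⟨0, hk⟩ = b := by
  obtain ⟨m, rfl⟩ : ∃ m, k = m + 1 := ⟨k - 1, by omega⟩
  simp [prefixBlock, List.ofFn_succ, List.cons_prefix_cons, eq_comm]

lemma aux_init_same {k : ℕ} (hk : 0 < k) {s t : Fin k → Bool}
    (h : inSameBlock (bisplitter k).init s t) : s ⟨0, hk⟩ = t ⟨0, hk⟩ := by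
  obtain ⟨B, hB, hs, ht⟩ := h
  simp only [bisplitter, Finset.mem_insert, Finset.mem_singleton] at hB
  rcases hB with rfl | rfl <;>
    rw [aux_mem_prefixBlock hk] at hs ht <;> rw [hs, ht]

lemma aux_mem_init {k : ℕ} (hk : 0 < k) (s : Fin k → Bool) :
    inSameBlock (bisplitter k).init s s := by
  refine ⟨prefixBlock k [s ⟨0, hk⟩], ?_, ?_, ?_⟩
  · cases h : s ⟨0, hk⟩ <;> simp [bisplitter, h]
  · rw [aux_mem_prefixBlock hk]
  · rw [aux_mem_prefixBlock hk]

lemma aux_step {k : ℕ} {s t : Fin k → Bool} {i : ℕ} (hi : i + 1 < k)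
    (hagree : ∀ p : Fin k, p.val ≤ i → s p = t p)
    (hs : s ⟨i + 1, hi⟩ = false) (ht : t ⟨i + 1, hi⟩ = true) :
    ∃ a : Fin (k - 1),
      bsStep s a = s ∧
      (∀ p : Fin k, p.val < i → s p = bsStep t a p) ∧
      s ⟨i, by omega⟩ ≠ bsStep t a ⟨i, by omega⟩ := by
  have ha : i < k - 1 := by omega
  have hik : i < k := by omega
  refine ⟨⟨i, ha⟩, ?_, ?_, ?_⟩
  · unfold bsStep
    split
    · rfl
    · next h => exact absurd hs h
  · intro p hp
    unfold bsStep
    split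
    · next h =>
        have h' : t ⟨i + 1, hi⟩ = false := h
        rw [ht] at h'; cases h'
    · next h =>
        simp only
        rw [if_pos (show p.val < i from hp)]
        exact hagree p (le_of_lt hp)
  · have hv : bsStep t ⟨i, ha⟩ ⟨i, hik⟩ = !(t ⟨i, hik⟩) := by
      unfold bsStep
      split
      · next h =>
          have h' : t ⟨i + 1, hi⟩ = false := h
          rw [ht] at h'; cases h'
      · simp
    show s ⟨i, hik⟩ ≠ bsStep t ⟨i, ha⟩ ⟨i, hik⟩
    rw [hv, hagree ⟨i, hik⟩ le_rfl]
    exact (Bool.not_ne_self _).symm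

lemma aux_first_diff {k : ℕ} {s t : Fin k → Bool} (h : s ≠ t) :
    ∃ i, ∃ hi : i < k, (∀ p : Fin k, p.val < i → s p = t p) ∧ s ⟨i, hi⟩ ≠ t ⟨i, hi⟩ := by
  classical
  have hex : ∃ p : ℕ, ∃ hp : p < k, s ⟨p, hp⟩ ≠ t ⟨p, hp⟩ := by
    obtain ⟨p, hp⟩ := Function.ne_iff.mp h
    exact ⟨p.val, p.isLt, hp⟩
  obtain ⟨hik, hdiff⟩ := Nat.find_spec hex
  refine ⟨Nat.find hex, hik, ?_, hdiff⟩
  intro p hp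
  by_contra hne2
  exact Nat.find_min hex hp ⟨p.isLt, hne2⟩

lemma aux_no_bisim {k : ℕ} (hk : 0 < k) :
    ∀ i, ∀ hi : i < k, ∀ s t : Fin k → Bool,
      (∀ p : Fin k, p.val < i → s p = t p) → s ⟨i, hi⟩ ≠ t ⟨i, hi⟩ →
      ¬ Bisimilar (bisplitter k) s t := by
  intro i
  induction i with
  | zero =>
      rintro hi s t _ hdiff ⟨R, ⟨_, hinit, _⟩, hR⟩
      exact hdiff (aux_init_same hk (hinit s t hR))
  | succ i ih =>
      rintro hi s t hagree hdiff ⟨R, hRb, hR⟩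
      obtain ⟨hsym, hinit, hstep⟩ := hRb
      have hag' : ∀ p : Fin k, p.val ≤ i → s p = t p := fun p hp => hagree p (by omega)
      cases hb : s ⟨i + 1, hi⟩ with
      | false =>
          have htb : t ⟨i + 1, hi⟩ = true := by
            cases h : t ⟨i + 1, hi⟩
            · exact absurd (hb.trans h.symm) hdiff
            · rfl
          obtain ⟨a, hfix, hag2, hd2⟩ := aux_step hi hag' hb htb
          have htr : (bisplitter k).tr s a s := hfix.symm
          obtain ⟨t', ht', hR'⟩ := hstep s t a s hR htr
          have he : t' = bsStep t a := ht'
          subst he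
          exact ih (by omega) s (bsStep t a) hag2 hd2 ⟨R, ⟨hsym, hinit, hstep⟩, hR'⟩
      | true =>
          have htb : t ⟨i + 1, hi⟩ = false := by
            cases h : t ⟨i + 1, hi⟩
            · rfl
            · exact absurd (hb.trans h.symm) hdiff
          have hag'' : ∀ p : Fin k, p.val ≤ i → t p = s p := fun p hp => (hag' p hp).symm
          obtain ⟨a, hfix, hag2, hd2⟩ := aux_step hi hag'' htb hb
          have htr : (bisplitter k).tr t a t := hfix.symm
          obtain ⟨s', hs', hR'⟩ := hstep t s a t (hsym hR) htr
          have he : s' = bsStep s a := hs'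
          subst he
          exact ih (by omega) t (bsStep s a) hag2 hd2 ⟨R, ⟨hsym, hinit, hstep⟩, hR'⟩

lemma aux_no_block {k : ℕ} (hk : 0 < k) (π : Finset (Finset (Fin k → Bool)))
    (hst : IsStablePartition (bisplitter k) π)
    (href : ∀ s t : Fin k → Bool, inSameBlock π s t → inSameBlock (bisplitter k).init s t) :
    ∀ i, ∀ hi : i < k, ∀ s t : Fin k → Bool,
      (∀ p : Fin k, p.val < i → s p = t p) → s ⟨i, hi⟩ ≠ t ⟨i, hi⟩ →
      ¬ inSameBlock π s t := by
  intro i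
  induction i with
  | zero =>
      intro hi s t _ hdiff hsame
      exact hdiff (aux_init_same hk (href s t hsame))
  | succ i ih =>
      intro hi s t hagree hdiff hsame
      have hag' : ∀ p : Fin k, p.val ≤ i → s p = t p := fun p hp => hagree p (by omega)
      obtain ⟨B, hB, hsB, htB⟩ := hsame
      cases hb : s ⟨i + 1, hi⟩ with
      | false =>
          have htb : t ⟨i + 1, hi⟩ = true := by
            cases h : t ⟨i + 1, hi⟩
            · exact absurd (hb.trans h.symm) hdiff
            · rfl
          obtain ⟨a, hfix, hag2, hd2⟩ := aux_step hi hag' hb htb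
          have hreach : ReachesSet (bisplitter k) s a B := ⟨s, hsB, hfix.symm⟩
          rcases hst B hB B hB a with hall | hnone
          · obtain ⟨u, huB, hu⟩ := hall t htB
            have he : u = bsStep t a := hu
            subst he
            exact ih (by omega) s (bsStep t a) hag2 hd2 ⟨B, hB, hsB, huB⟩
          · exact hnone s hsB hreach
      | true =>
          have htb : t ⟨i + 1, hi⟩ = false := by
            cases h : t ⟨i + 1, hi⟩
            · rfl
            · exact absurd (hb.trans h.symm) hdiff
          have hag'' : ∀ p : Fin k, p.val ≤ i → t p = s p := fun p hp => (hag' p hp).symm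
          obtain ⟨a, hfix, hag2, hd2⟩ := aux_step hi hag'' htb hb
          have hreach : ReachesSet (bisplitter k) t a B := ⟨t, htB, hfix.symm⟩
          rcases hst B hB B hB a with hall | hnone
          · obtain ⟨u, huB, hu⟩ := hall s hsB
            have he : u = bsStep s a := hu
            subst he
            exact ih (by omega) t (bsStep s a) hag2 hd2 ⟨B, hB, htB, huB⟩
          · exact hnone t htB hreach

/-- For k ≥ 1, two states of the bisplitter `B_k` are bisimilar iff they are
equal; equivalently, the last (stable) partition of every valid refinement sequence for
`B_k` is the partition into singletons. -/
theorem bisplitter_bisimilarity_is_identity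
    (k : ℕ) (hk : 1 ≤ k) :
    (∀ s t : Fin k → Bool, Bisimilar (bisplitter k) s t ↔ s = t) ∧
    (∀ (n : ℕ) (seq : ℕ → Finset (Finset (Fin k → Bool))),
        ValidRefinementSeq (bisplitter k) n seq →
        seq n = Finset.univ.image fun s : Fin k → Bool => ({s} : Finset (Fin k → Bool))) := by
  have hk' : 0 < k := hk
  constructor
  · intro s t
    constructor
    · intro hbis
      by_contra hne
      obtain ⟨i, hi, hagree, hdiff⟩ := aux_first_diff hne
      exact aux_no_bisim hk' i hi s t hagree hdiff hbis
    · rintro rfl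
      refine ⟨Eq, ⟨fun _ _ h => h.symm, fun a b h => by subst h; exact aux_mem_init hk' a,
        fun a b c d hab htr => ⟨d, hab ▸ htr, rfl⟩⟩, rfl⟩
  · intro n seq hseq
    obtain ⟨h0, hpart, hvalid, hstable⟩ := hseq
    have href0 : ∀ j, j ≤ n → RefinesPart (seq j) (seq 0) := by
      intro j
      induction j with
      | zero => exact fun _ B hB => ⟨B, hB, subset_rfl⟩
      | succ j ihj =>
          intro hj B hB
          obtain ⟨B1, hB1, hsub1⟩ := (hvalid j (by omega)).1 B hB
          obtain ⟨B0, hB0, hsub0⟩ := ihj (by omega) B1 hB1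
          exact ⟨B0, hB0, hsub1.trans hsub0⟩
    have href : ∀ s t : Fin k → Bool, inSameBlock (seq n) s t →
        inSameBlock (bisplitter k).init s t := by
      rintro s t ⟨B, hB, hs, ht⟩
      obtain ⟨B0, hB0, hsub⟩ := href0 n le_rfl B hB
      rw [h0] at hB0
      exact ⟨B0, hB0, hsub hs, hsub ht⟩
    obtain ⟨hne, hdisj, hcover⟩ := hpart n le_rfl
    have hsingle : ∀ B ∈ seq n, ∀ s ∈ B, B = {s} := by
      intro B hB s hs
      refine Finset.eq_singleton_iff_unique_mem.mpr ⟨hs, fun t ht => ?_⟩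
      by_contra hne'
      obtain ⟨i, hi, hagree, hdiff⟩ := aux_first_diff hne'
      exact aux_no_block hk' (seq n) hstable href i hi t s hagree hdiff ⟨B, hB, ht, hs⟩
    ext B
    simp only [Finset.mem_image, Finset.mem_univ, true_and]
    constructor
    · intro hB
      have hBne : B.Nonempty := Finset.nonempty_iff_ne_empty.mpr (fun h => hne (h ▸ hB))
      obtain ⟨s, hs⟩ := hBne
      exact ⟨s, (hsingle B hB s hs).symm⟩
    · rintro ⟨s, rfl⟩
      obtain ⟨B, hB, hsB⟩ := hcover s
      rwa [hsingle B hB s hsB] at hB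
end

section
/- For every k > 2, the bisplitter B_k has exactly two end structures, namely the singletons {0^k} and {1·0^{k−1}}; moreover every state σ ∈ Bit^k with σ ≠ 0^k and σ ≠ 1·0^{k−1} has a nonempty path of transitions leading to 0^k or to 1·0^{k−1}. -/
section Aux

lemma bsStep_zero (k : ℕ) (j : Fin (k - 1)) : bsStep (zeroState k) j = zeroState k := by
  unfold bsStep zeroState
  simp

lemma bsStep_one (k : ℕ) (j : Fin (k - 1)) : bsStep (oneState k) j = oneState k := by
  unfold bsStep oneState
  simp

lemma endstruct_singleton (k : ℕ) (σ : Fin k → Bool)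
    (hfix : ∀ j, bsStep σ j = σ) : EndStructure (bisplitter k) {σ} := by
  refine ⟨Set.singleton_nonempty σ, ?_, ?_⟩
  · intro s hs a t ht
    rcases hs with rfl
    rcases ht with rfl
    rw [hfix]; rfl
  · intro V _ hV
    rcases hV with ⟨x, hx1, hx2⟩
    rcases hx1 with rfl
    exact Set.singleton_subset_iff.mpr hx2

lemma closed_path {k : ℕ} (U : Set (Fin k → Bool)) (hU : TransClosed (bisplitter k) U) :
    ∀ (w : List (Fin (k - 1))) (σ t : Fin k → Bool), σ ∈ U →
      PathTo (bisplitter k) w σ t → t ∈ U := by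
  intro w
  induction w with
  | nil => intro σ t hσ h; exact h ▸ hσ
  | cons a w ih =>
    intro σ t hσ h
    rcases h with ⟨u, hu, hp⟩
    exact ih u t (hU σ hσ a u hu) hp

lemma path_lemma (k : ℕ) (hk : 2 < k) :
    ∀ n, 1 ≤ n → ∀ (hn : n < k) (σ : Fin k → Bool),
      σ ⟨n, hn⟩ = true → (∀ p (hp : p < k), 1 ≤ p → p < n → σ ⟨p, hp⟩ = false) →
      ∃ w : List (Fin (k - 1)), w ≠ [] ∧
        (PathTo (bisplitter k) w σ (zeroState k) ∨
          PathTo (bisplitter k) w σ (oneState k)) := by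
  intro n
  induction n with
  | zero => omega
  | succ m ih =>
    intro _ hn σ hσ hmin
    have hm1 : m < k - 1 := by omega
    set a : Fin (k - 1) := ⟨m, hm1⟩ with ha
    have hav : (⟨a.val + 1, by omega⟩ : Fin k) = ⟨m + 1, hn⟩ := rfl
    have hstep : bsStep σ a =
        fun p => if p.val < m then σ p else if p.val = m then !(σ p) else false := by
      unfold bsStep
      rw [hav, hσ]
      simp
      rfl
    rcases Nat.eq_zero_or_pos m with hm | hm
    · -- n = 1 : one step to a fixed point
      subst hm
      refine ⟨[a], by simp, ?_⟩
      have htr : (bisplitter k).tr σ a (bsStep σ a) := rfl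
      cases h0 : σ ⟨0, by omega⟩ with
      | true =>
        left
        refine ⟨bsStep σ a, htr, ?_⟩
        show bsStep σ a = zeroState k
        rw [hstep]
        funext p
        simp only [zeroState]
        rcases Nat.eq_zero_or_pos p.val with hp | hp
        · have hpe : p = ⟨0, by omega⟩ := Fin.ext hp
          simp [hp, hpe, h0]
        · simp [Nat.not_lt_zero, Nat.pos_iff_ne_zero.mp hp]
      | false =>
        right
        refine ⟨bsStep σ a, htr, ?_⟩
        show bsStep σ a = oneState k
        rw [hstep]
        funext p
        simp only [oneState]
        rcases Nat.eq_zero_or_pos p.val with hp | hp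
        · have hpe : p = ⟨0, by omega⟩ := Fin.ext hp
          simp [hp, hpe, h0]
        · simp [Nat.not_lt_zero, Nat.pos_iff_ne_zero.mp hp, Nat.pos_iff_ne_zero.mp hp]
    · -- n = m + 1, m ≥ 1 : one step then induction
      set τ : Fin k → Bool :=
        fun p => if p.val < m then σ p else if p.val = m then !(σ p) else false with hτ
      have hσm : σ ⟨m, by omega⟩ = false := hmin m (by omega) hm (by omega)
      have hτm : τ ⟨m, by omega⟩ = true := by simp [hτ, hσm]
      have hτmin : ∀ p (hp : p < k), 1 ≤ p → p < m → τ ⟨p, hp⟩ = false := by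
        intro p hp h1 h2
        simp only [hτ, h2, if_true]
        exact hmin p hp h1 (by omega)
      obtain ⟨w, hw, hpath⟩ := ih hm (by omega) τ hτm hτmin
      refine ⟨a :: w, by simp, ?_⟩
      have htr : (bisplitter k).tr σ a τ := hstep.symm
      rcases hpath with h | h
      · exact Or.inl ⟨τ, htr, h⟩
      · exact Or.inr ⟨τ, htr, h⟩

end Aux

/-- For k > 2, the bisplitter `B_k` has exactly the two end structures
`{0^k}` and `{1·0^(k-1)}`, and every other state has a nonempty path to one of them. -/
theorem bisplitter_end_structures
    (k : ℕ) (hk : 2 < k) :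
    (∀ U : Set (Fin k → Bool),
        EndStructure (bisplitter k) U ↔
          U = {zeroState k} ∨ U = {oneState k}) ∧
    ∀ σ : Fin k → Bool, σ ≠ zeroState k → σ ≠ oneState k →
      ∃ w : List (Fin (k - 1)), w ≠ [] ∧
        (PathTo (bisplitter k) w σ (zeroState k) ∨
          PathTo (bisplitter k) w σ (oneState k)) := by
  have hpart2 : ∀ σ : Fin k → Bool, σ ≠ zeroState k → σ ≠ oneState k →
      ∃ w : List (Fin (k - 1)), w ≠ [] ∧
        (PathTo (bisplitter k) w σ (zeroState k) ∨
          PathTo (bisplitter k) w σ (oneState k)) := by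
    intro σ h0 h1
    -- there is an index i ≥ 1 with σ i = true
    have hex : ∃ i : ℕ, 1 ≤ i ∧ i < k ∧ σ ⟨i % k, Nat.mod_lt _ (by omega)⟩ = true := by
      by_contra hc
      push_neg at hc
      have hall : ∀ p : Fin k, 1 ≤ p.val → σ p = false := by
        intro p hp
        have := hc p.val hp p.isLt
        have hpk : p.val % k = p.val := Nat.mod_eq_of_lt p.isLt
        have hpe : (⟨p.val % k, Nat.mod_lt _ (by omega)⟩ : Fin k) = p := Fin.ext hpk
        rw [hpe] at this
        simpa using this
      cases hσ0 : σ ⟨0, by omega⟩ with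
      | false =>
        apply h0
        funext p
        rcases Nat.eq_zero_or_pos p.val with hp | hp
        · have : p = ⟨0, by omega⟩ := Fin.ext hp
          rw [this, hσ0]; rfl
        · rw [hall p hp]; rfl
      | true =>
        apply h1
        funext p
        rcases Nat.eq_zero_or_pos p.val with hp | hp
        · have : p = ⟨0, by omega⟩ := Fin.ext hp
          rw [this, hσ0]
          simp [oneState, hp]
        · rw [hall p hp]
          simp [oneState, Nat.pos_iff_ne_zero.mp hp]
    classical
    set n := Nat.find hex with hn
    obtain ⟨hn1, hnk, hnσ⟩ := Nat.find_spec hex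
    have hmin : ∀ p (hp : p < k), 1 ≤ p → p < n → σ ⟨p, hp⟩ = false := by
      intro p hp h1p h2p
      have := Nat.find_min hex h2p
      push_neg at this
      have := this h1p hp
      have hpk : p % k = p := Nat.mod_eq_of_lt hp
      have hpe : (⟨p % k, Nat.mod_lt _ (by omega)⟩ : Fin k) = ⟨p, hp⟩ := Fin.ext hpk
      rw [hpe] at this
      simpa using this
    have hnσ' : σ ⟨n, hnk⟩ = true := by
      have hpe : (⟨n % k, Nat.mod_lt _ (by omega)⟩ : Fin k) = ⟨n, hnk⟩ :=
        Fin.ext (Nat.mod_eq_of_lt hnk)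
      rw [hpe] at hnσ
      exact hnσ
    exact path_lemma k hk n hn1 hnk σ hnσ' hmin
  refine ⟨?_, hpart2⟩
  have hz : EndStructure (bisplitter k) {zeroState k} :=
    endstruct_singleton k _ (bsStep_zero k)
  have ho : EndStructure (bisplitter k) {oneState k} :=
    endstruct_singleton k _ (bsStep_one k)
  intro U
  constructor
  · rintro ⟨⟨σ, hσ⟩, hclosed, hminU⟩
    have hmem : zeroState k ∈ U ∨ oneState k ∈ U := by
      by_cases h0 : σ = zeroState k
      · exact Or.inl (h0 ▸ hσ)
      by_cases h1 : σ = oneState k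
      · exact Or.inr (h1 ▸ hσ)
      obtain ⟨w, -, hp⟩ := hpart2 σ h0 h1
      rcases hp with hp | hp
      · exact Or.inl (closed_path U hclosed w σ _ hσ hp)
      · exact Or.inr (closed_path U hclosed w σ _ hσ hp)
    rcases hmem with hm | hm
    · left
      exact Set.Subset.antisymm (hminU _ hz.2.1 ⟨zeroState k, hm, rfl⟩)
        (Set.singleton_subset_iff.mpr hm)
    · right
      exact Set.Subset.antisymm (hminU _ ho.2.1 ⟨oneState k, hm, rfl⟩)
        (Set.singleton_subset_iff.mpr hm)
  · rintro (rfl | rfl)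
    · exact hz
    · exact ho
end

section
/- Let k > 2 and let B'_k be the bisplitter B_k with its initial partition replaced by the updated initial partition π'₀ = { {0^k}, B_0 \ {0^k}, {1·0^{k−1}}, B_1 \ {1·0^{k−1}} }, where B_0 = 0·Bit^{k−1} and B_1 = 1·Bit^{k−1}. Then every valid refinement sequence Π = (π'₀, π_1, …, π_n) for B'_k satisfies IRC(Π) ≥ IRC(B_{k−2}). -/
/-! ## Auxiliary development for the reduction -/

section Reduction

lemma inSameBlock_symm {S : Type} {π : Finset (Finset S)} {s t : S}
    (h : inSameBlock π s t) : inSameBlock π t s := by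
  obtain ⟨B, hB, h1, h2⟩ := h; exact ⟨B, hB, h2, h1⟩

lemma refinesPart_refl {S : Type} (π : Finset (Finset S)) : RefinesPart π π :=
  fun B hB => ⟨B, hB, subset_rfl⟩

lemma refinesPart_trans {S : Type} {π₁ π₂ π₃ : Finset (Finset S)}
    (h12 : RefinesPart π₁ π₂) (h23 : RefinesPart π₂ π₃) : RefinesPart π₁ π₃ := by
  intro B hB
  obtain ⟨C, hC, hBC⟩ := h12 B hB
  obtain ⟨D, hD, hCD⟩ := h23 C hC
  exact ⟨D, hD, hBC.trans hCD⟩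

/-- The state b·0^{k-1}. -/
def baseSt (k : ℕ) (b : Bool) : Fin k → Bool := fun p => if p.val = 0 then b else false

lemma zeroState_eq_base (k : ℕ) : zeroState k = baseSt k false := by
  funext p; simp [zeroState, baseSt]

lemma oneState_eq_base (k : ℕ) : oneState k = baseSt k true := by
  funext p; by_cases h : p.val = 0 <;> simp [oneState, baseSt, h]

/-- The embedding ψ(τ) = τ(0)·1·τ(1..m-1)·0 of Bit^{k-2} into Bit^k. -/
def psiEmb (k : ℕ) (τ : Fin (k - 2) → Bool) : Fin k → Bool :=
  fun p => if p.val = 1 then true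
    else if h : p.val - 1 < k - 2 ∧ p.val ≤ k - 2 then τ ⟨p.val - 1, h.1⟩ else false

def traceBlock (k : ℕ) (B : Finset (Fin k → Bool)) : Finset (Fin (k - 2) → Bool) :=
  Finset.univ.filter fun τ => psiEmb k τ ∈ B

def tracePart (k : ℕ) (π : Finset (Finset (Fin k → Bool))) :
    Finset (Finset (Fin (k - 2) → Bool)) :=
  (π.image (traceBlock k)).erase ∅

variable {k : ℕ}

lemma psiEmb_zero (hk : 2 < k) (τ : Fin (k - 2) → Bool) :
    psiEmb k τ ⟨0, by omega⟩ = τ ⟨0, by omega⟩ := by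
  simp only [psiEmb]
  rw [if_neg (by omega), dif_pos (by omega)]

lemma psiEmb_one (hk : 2 < k) (τ : Fin (k - 2) → Bool) :
    psiEmb k τ ⟨1, by omega⟩ = true := by
  simp [psiEmb]

lemma psiEmb_mid (hk : 2 < k) (τ : Fin (k - 2) → Bool) (p : ℕ) (h2 : 2 ≤ p) (hp : p ≤ k - 2) :
    psiEmb k τ ⟨p, by omega⟩ = τ ⟨p - 1, by omega⟩ := by
  simp only [psiEmb]
  rw [if_neg (by omega), dif_pos (by omega)]

lemma psiEmb_last (hk : 2 < k) (τ : Fin (k - 2) → Bool) :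
    psiEmb k τ ⟨k - 1, by omega⟩ = false := by
  simp only [psiEmb]
  rw [if_neg (by omega), dif_neg (by omega)]

lemma psiEmb_ne_zeroState (hk : 2 < k) (τ : Fin (k - 2) → Bool) :
    psiEmb k τ ≠ zeroState k := by
  intro h
  have := congrFun h ⟨1, by omega⟩
  rw [psiEmb_one hk] at this
  simp [zeroState] at this

lemma psiEmb_ne_oneState (hk : 2 < k) (τ : Fin (k - 2) → Bool) :
    psiEmb k τ ≠ oneState k := by
  intro h
  have := congrFun h ⟨1, by omega⟩
  rw [psiEmb_one hk] at this
  simp [oneState] at this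

lemma psiEmb_injective (hk : 2 < k) : Function.Injective (psiEmb k) := by
  intro τ τ' h
  funext q
  rcases q with ⟨q, hq⟩
  rcases Nat.eq_zero_or_pos q with rfl | hq0
  · have := congrFun h ⟨0, by omega⟩
    rwa [psiEmb_zero hk, psiEmb_zero hk] at this
  · have := congrFun h ⟨q + 1, by omega⟩
    rw [psiEmb_mid hk τ (q+1) (by omega) (by omega),
        psiEmb_mid hk τ' (q+1) (by omega) (by omega)] at this
    simpa using this

lemma mem_prefixBlock_iff_s8 {m : ℕ} (hm : 0 < m) (σ : Fin m → Bool) (b : Bool) :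
    σ ∈ prefixBlock m [b] ↔ σ ⟨0, hm⟩ = b := by
  obtain ⟨m', rfl⟩ : ∃ m', m = m' + 1 := ⟨m - 1, by omega⟩
  simp only [prefixBlock, Finset.mem_filter, Finset.mem_univ, true_and]
  rw [List.ofFn_succ]
  constructor
  · rintro ⟨t, ht⟩
    have : b :: t = σ 0 :: List.ofFn fun i => σ i.succ := ht
    injection this with h1 _
    show σ 0 = b
    exact h1.symm
  · intro h
    refine ⟨List.ofFn fun i => σ i.succ, ?_⟩
    show b :: _ = σ 0 :: _
    have h0 : σ 0 = b := h
    rw [h0]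
    rfl

lemma mem_init'_iff (B : Finset (Fin k → Bool)) :
    B ∈ (bisplitter' k).init ↔
      B = {zeroState k} ∨ B = prefixBlock k [false] \ {zeroState k} ∨
      B = {oneState k} ∨ B = prefixBlock k [true] \ {oneState k} := by
  simp [bisplitter']

lemma first_bit_of_init' (hk : 2 < k) {π : Finset (Finset (Fin k → Bool))}
    (hR : RefinesPart π (bisplitter' k).init) {σ σ' : Fin k → Bool}
    (h : inSameBlock π σ σ') : σ ⟨0, by omega⟩ = σ' ⟨0, by omega⟩ := by
  obtain ⟨B, hB, h1, h2⟩ := h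
  obtain ⟨I, hI, hBI⟩ := hR B hB
  rw [mem_init'_iff] at hI
  rcases hI with rfl | rfl | rfl | rfl
  · have e1 := Finset.mem_singleton.mp (hBI h1)
    have e2 := Finset.mem_singleton.mp (hBI h2)
    rw [e1, e2]
  · have e1 := (Finset.mem_sdiff.mp (hBI h1)).1
    have e2 := (Finset.mem_sdiff.mp (hBI h2)).1
    rw [mem_prefixBlock_iff_s8 (by omega : 0 < k)] at e1 e2
    rw [e1, e2]
  · have e1 := Finset.mem_singleton.mp (hBI h1)
    have e2 := Finset.mem_singleton.mp (hBI h2)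
    rw [e1, e2]
  · have e1 := (Finset.mem_sdiff.mp (hBI h1)).1
    have e2 := (Finset.mem_sdiff.mp (hBI h2)).1
    rw [mem_prefixBlock_iff_s8 (by omega : 0 < k)] at e1 e2
    rw [e1, e2]

lemma not_same_psi_base (hk : 2 < k) {π : Finset (Finset (Fin k → Bool))}
    (hR : RefinesPart π (bisplitter' k).init) (τ : Fin (k - 2) → Bool) (b : Bool) :
    ¬ inSameBlock π (psiEmb k τ) (baseSt k b) := by
  rintro ⟨B, hB, h1, h2⟩
  obtain ⟨I, hI, hBI⟩ := hR B hB
  rw [mem_init'_iff] at hI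
  rcases hI with rfl | rfl | rfl | rfl
  · exact psiEmb_ne_zeroState hk τ (Finset.mem_singleton.mp (hBI h1))
  · have e2 := Finset.mem_sdiff.mp (hBI h2)
    cases b
    · exact e2.2 (by rw [← zeroState_eq_base]; exact Finset.mem_singleton_self _)
    · have := (mem_prefixBlock_iff_s8 (by omega : 0 < k) _ _).mp e2.1
      simp [baseSt] at this
  · exact psiEmb_ne_oneState hk τ (Finset.mem_singleton.mp (hBI h1))
  · have e2 := Finset.mem_sdiff.mp (hBI h2)
    cases b
    · have := (mem_prefixBlock_iff_s8 (by omega : 0 < k) _ _).mp e2.1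
      simp [baseSt] at this
    · exact e2.2 (by rw [← oneState_eq_base]; exact Finset.mem_singleton_self _)

lemma inSameBlock_trace_iff {π : Finset (Finset (Fin k → Bool))}
    (τ τ' : Fin (k - 2) → Bool) :
    inSameBlock (tracePart k π) τ τ' ↔ inSameBlock π (psiEmb k τ) (psiEmb k τ') := by
  constructor
  · rintro ⟨C, hC, h1, h2⟩
    obtain ⟨B, hB, rfl⟩ := Finset.mem_image.mp (Finset.mem_of_mem_erase hC)
    rw [traceBlock, Finset.mem_filter] at h1 h2
    exact ⟨B, hB, h1.2, h2.2⟩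
  · rintro ⟨B, hB, h1, h2⟩
    have hm1 : τ ∈ traceBlock k B := by rw [traceBlock, Finset.mem_filter]; exact ⟨Finset.mem_univ _, h1⟩
    have hm2 : τ' ∈ traceBlock k B := by rw [traceBlock, Finset.mem_filter]; exact ⟨Finset.mem_univ _, h2⟩
    refine ⟨traceBlock k B, Finset.mem_erase.mpr ⟨?_, Finset.mem_image_of_mem _ hB⟩, hm1, hm2⟩
    exact Finset.ne_empty_of_mem hm1

lemma tracePart_isBlockPartition {π : Finset (Finset (Fin k → Bool))}
    (hBP : IsBlockPartition π) : IsBlockPartition (tracePart k π) := by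
  obtain ⟨hne, hdisj, hcov⟩ := hBP
  refine ⟨fun h => (Finset.mem_erase.mp h).1 rfl, ?_, ?_⟩
  · intro C hC C' hC' hne'
    obtain ⟨B, hB, rfl⟩ := Finset.mem_image.mp (Finset.mem_of_mem_erase hC)
    obtain ⟨B', hB', rfl⟩ := Finset.mem_image.mp (Finset.mem_of_mem_erase hC')
    have hBB' : B ≠ B' := fun h => hne' (by rw [h])
    rw [Finset.disjoint_left]
    intro τ h1 h2
    rw [traceBlock, Finset.mem_filter] at h1 h2
    exact (Finset.disjoint_left.mp (hdisj B hB B' hB' hBB')) h1.2 h2.2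
  · intro τ
    obtain ⟨B, hB, hmem⟩ := hcov (psiEmb k τ)
    have hm : τ ∈ traceBlock k B := by rw [traceBlock, Finset.mem_filter]; exact ⟨Finset.mem_univ _, hmem⟩
    exact ⟨traceBlock k B,
      Finset.mem_erase.mpr ⟨Finset.ne_empty_of_mem hm, Finset.mem_image_of_mem _ hB⟩, hm⟩

lemma inSameBlock_trace_self {π : Finset (Finset (Fin k → Bool))}
    (hBP : IsBlockPartition π) (u : Fin (k - 2) → Bool) :
    inSameBlock (tracePart k π) u u := by
  obtain ⟨C, hC, hu⟩ := (tracePart_isBlockPartition hBP).2.2 u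
  exact ⟨C, hC, hu, hu⟩

lemma trace_refines {π ξ : Finset (Finset (Fin k → Bool))}
    (h : RefinesPart π ξ) : RefinesPart (tracePart k π) (tracePart k ξ) := by
  intro C hC
  obtain ⟨B, hB, rfl⟩ := Finset.mem_image.mp (Finset.mem_of_mem_erase hC)
  obtain ⟨I, hI, hBI⟩ := h B hB
  have hsub : traceBlock k B ⊆ traceBlock k I := by
    intro τ hτ
    rw [traceBlock, Finset.mem_filter] at hτ ⊢
    exact ⟨hτ.1, hBI hτ.2⟩
  obtain ⟨τ, hτ⟩ := Finset.nonempty_of_ne_empty (Finset.mem_erase.mp hC).1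
  refine ⟨traceBlock k I, Finset.mem_erase.mpr
    ⟨Finset.ne_empty_of_mem (hsub hτ), Finset.mem_image_of_mem _ hI⟩, hsub⟩

lemma traceBlock_D (hk : 2 < k) (b : Bool) :
    traceBlock k (prefixBlock k [b] \ {baseSt k b}) = prefixBlock (k - 2) [b] := by
  ext τ
  rw [traceBlock, Finset.mem_filter, Finset.mem_sdiff,
      mem_prefixBlock_iff_s8 (by omega : 0 < k), mem_prefixBlock_iff_s8 (by omega : 0 < k - 2),
      psiEmb_zero hk]
  constructor
  · rintro ⟨_, h, _⟩; exact h
  · intro h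
    refine ⟨Finset.mem_univ _, ⟨h, ?_⟩⟩
    intro hc
    have := Finset.mem_singleton.mp hc
    cases b
    · rw [← zeroState_eq_base] at this; exact psiEmb_ne_zeroState hk τ this
    · rw [← oneState_eq_base] at this; exact psiEmb_ne_oneState hk τ this

lemma tracePart_init (hk : 2 < k) :
    tracePart k (bisplitter' k).init = (bisplitter (k - 2)).init := by
  have hz : traceBlock k {zeroState k} = ∅ := by
    ext τ
    simp only [traceBlock, Finset.mem_filter, Finset.mem_univ, true_and,
      Finset.mem_singleton, Finset.notMem_empty, iff_false]
    exact psiEmb_ne_zeroState hk τ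
  have ho : traceBlock k {oneState k} = ∅ := by
    ext τ
    simp only [traceBlock, Finset.mem_filter, Finset.mem_univ, true_and,
      Finset.mem_singleton, Finset.notMem_empty, iff_false]
    exact psiEmb_ne_oneState hk τ
  have hD0 : traceBlock k (prefixBlock k [false] \ {zeroState k}) = prefixBlock (k - 2) [false] := by
    rw [zeroState_eq_base]; exact traceBlock_D hk false
  have hD1 : traceBlock k (prefixBlock k [true] \ {oneState k}) = prefixBlock (k - 2) [true] := by
    rw [oneState_eq_base]; exact traceBlock_D hk true
  have hpf : ∀ b : Bool, (fun _ => b) ∈ prefixBlock (k - 2) [b] := fun b =>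
    (mem_prefixBlock_iff_s8 (by omega : 0 < k - 2) _ b).mpr rfl
  ext C
  constructor
  · intro hC
    obtain ⟨hne, hC'⟩ := Finset.mem_erase.mp hC
    obtain ⟨B, hB, rfl⟩ := Finset.mem_image.mp hC'
    rw [mem_init'_iff] at hB
    show _ ∈ ({prefixBlock (k-2) [false], prefixBlock (k-2) [true]} : Finset _)
    rcases hB with rfl | rfl | rfl | rfl
    · exact absurd hz hne
    · rw [hD0]; exact Finset.mem_insert_self _ _
    · exact absurd ho hne
    · rw [hD1]; exact Finset.mem_insert.mpr (Or.inr (Finset.mem_singleton_self _))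
  · intro hC
    have hC' : C = prefixBlock (k-2) [false] ∨ C = prefixBlock (k-2) [true] := by
      simpa [bisplitter] using hC
    have hB : ∃ B ∈ (bisplitter' k).init, traceBlock k B = C := by
      rcases hC' with rfl | rfl
      · exact ⟨_, (mem_init'_iff _).mpr (Or.inr (Or.inl rfl)), hD0⟩
      · exact ⟨_, (mem_init'_iff _).mpr (Or.inr (Or.inr (Or.inr rfl))), hD1⟩
    obtain ⟨B, hB, rfl⟩ := hB
    refine Finset.mem_erase.mpr ⟨?_, Finset.mem_image_of_mem _ hB⟩
    rcases hC' with h | h <;>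
    · intro he
      rw [he] at h
      exact Finset.notMem_empty _ (h ▸ hpf _)

lemma bsStep_apply {N : ℕ} (σ : Fin N → Bool) (j : Fin (N - 1)) (p : Fin N) :
    bsStep σ j p =
      if σ ⟨j.val + 1, by have := j.isLt; omega⟩ = false then σ p
      else if p.val < j.val then σ p else if p.val = j.val then !(σ p) else false := by
  rw [bsStep, ite_apply]

lemma bsStep_stay {N : ℕ} (σ : Fin N → Bool) (j : Fin (N - 1))
    (h : σ ⟨j.val + 1, by have := j.isLt; omega⟩ = false) : bsStep σ j = σ := by
  rw [bsStep, if_pos h]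

lemma bsStep_psi_zero (hk : 2 < k) (τ : Fin (k - 2) → Bool) :
    bsStep (psiEmb k τ) ⟨0, by omega⟩ = baseSt k (!(τ ⟨0, by omega⟩)) := by
  funext p
  rcases p with ⟨p, hp⟩
  rw [bsStep_apply, if_neg (by rw [psiEmb_one hk]; simp)]
  simp only [baseSt]
  rcases Nat.eq_zero_or_pos p with rfl | hpos
  · rw [if_neg (by omega), if_pos rfl, if_pos rfl, psiEmb_zero hk]
  · rw [if_neg (by omega), if_neg (by omega), if_neg (by omega)]

lemma bsStep_psi_one (hk4 : 4 ≤ k) (τ : Fin (k - 2) → Bool) :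
    bsStep (psiEmb k τ) ⟨1, by omega⟩ =
      if τ ⟨1, by omega⟩ = false then psiEmb k τ else baseSt k (τ ⟨0, by omega⟩) := by
  have hk : 2 < k := by omega
  have hcond : psiEmb k τ ⟨1 + 1, by omega⟩ = τ ⟨1, by omega⟩ :=
    psiEmb_mid hk τ 2 le_rfl (by omega)
  by_cases hb : τ ⟨1, by omega⟩ = false
  · rw [if_pos hb]
    exact bsStep_stay _ _ (hcond.trans hb)
  · rw [if_neg hb]
    funext p
    rcases p with ⟨p, hp⟩
    rw [bsStep_apply, if_neg (fun hf => hb (hcond.symm.trans hf))]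
    simp only [baseSt]
    rcases Nat.eq_zero_or_pos p with rfl | hpos
    · rw [if_pos (by omega), if_pos rfl, psiEmb_zero hk]
    · rcases Nat.lt_or_ge p 2 with h2 | h2
      · have hp1 : p = 1 := by omega
        subst hp1
        rw [if_neg (by omega), if_pos rfl, if_neg (by omega), psiEmb_one hk]
        rfl
      · rw [if_neg (by omega), if_neg (by omega), if_neg (by omega)]

lemma bsStep_psi_mid (hk : 2 < k) (τ : Fin (k - 2) → Bool) (j : ℕ)
    (h2 : 2 ≤ j) (h3 : j ≤ k - 3) :
    bsStep (psiEmb k τ) ⟨j, by omega⟩ = psiEmb k (bsStep τ ⟨j - 1, by omega⟩) := by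
  have hcond : psiEmb k τ ⟨j + 1, by omega⟩ = τ ⟨j, by omega⟩ :=
    psiEmb_mid hk τ (j + 1) (by omega) (by omega)
  have hcond' : τ ⟨j - 1 + 1, by omega⟩ = τ ⟨j, by omega⟩ := by
    congr 1; apply Fin.ext; show j - 1 + 1 = j; omega
  by_cases hb : τ ⟨j, by omega⟩ = false
  · rw [bsStep_stay _ _ (hcond.trans hb), bsStep_stay _ _ (hcond'.trans hb)]
  · funext p
    rcases p with ⟨p, hp⟩
    rw [bsStep_apply, if_neg (fun hf => hb (hcond.symm.trans hf))]
    rcases Nat.eq_zero_or_pos p with rfl | hpos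
    · rw [if_pos (show 0 < j by omega), psiEmb_zero hk, psiEmb_zero hk,
          bsStep_apply, if_neg (fun hf => hb (hcond'.symm.trans hf)),
          if_pos (show 0 < j - 1 by omega)]
    · rcases Nat.lt_or_ge p 2 with hlt | hge
      · have hp1 : p = 1 := by omega
        subst hp1
        rw [if_pos (show 1 < j by omega), psiEmb_one hk, psiEmb_one hk]
      · rcases Nat.lt_or_ge p (k - 1) with hplt | hpge
        · rw [psiEmb_mid hk (bsStep τ ⟨j - 1, by omega⟩) p hge (by omega),
              bsStep_apply, if_neg (fun hf => hb (hcond'.symm.trans hf))]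
          rcases Nat.lt_trichotomy p j with hc | hc | hc
          · rw [if_pos (show p < j from hc), if_pos (show p - 1 < j - 1 by omega),
                psiEmb_mid hk τ p hge (by omega)]
          · subst hc
            rw [if_neg (show ¬ p < p by omega), if_pos rfl,
                if_neg (show ¬ p - 1 < p - 1 by omega), if_pos rfl,
                psiEmb_mid hk τ p hge (by omega)]
          · rw [if_neg (show ¬ p < j by omega), if_neg (show p ≠ j by omega),
                if_neg (show ¬ p - 1 < j - 1 by omega), if_neg (show p - 1 ≠ j - 1 by omega)]
        · have hpk : p = k - 1 := by omega
          subst hpk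
          rw [if_neg (show ¬ k - 1 < j by omega), if_neg (show k - 1 ≠ j by omega),
              psiEmb_last hk]

lemma bsStep_psi_last (hk : 2 < k) (τ : Fin (k - 2) → Bool) :
    bsStep (psiEmb k τ) ⟨k - 2, by omega⟩ = psiEmb k τ := by
  refine bsStep_stay _ _ ?_
  have h : psiEmb k τ ⟨k - 1, by omega⟩ = false := psiEmb_last hk τ
  rw [show (⟨k - 2 + 1, by omega⟩ : Fin k) = ⟨k - 1, by omega⟩ from by
    apply Fin.ext; show k - 2 + 1 = k - 1; omega]
  exact h

lemma bsStep_m_zero {m : ℕ} (hm : 2 ≤ m) (τ : Fin m → Bool) :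
    bsStep τ ⟨0, by omega⟩ =
      if τ ⟨1, by omega⟩ = false then τ else baseSt m (!(τ ⟨0, by omega⟩)) := by
  by_cases hb : τ ⟨1, by omega⟩ = false
  · rw [if_pos hb]
    exact bsStep_stay _ _ hb
  · rw [if_neg hb]
    funext p
    rcases p with ⟨p, hp⟩
    rw [bsStep_apply, if_neg hb]
    show (if p < 0 then τ ⟨p, hp⟩ else if p = 0 then !(τ ⟨p, hp⟩) else false)
        = (if p = 0 then !(τ ⟨0, by omega⟩) else false)
    split_ifs <;> first | omega | rfl | (subst_vars; rfl)

lemma bisplitter_tr_iff {N : ℕ} (s t : Fin N → Bool) (a : Fin (N - 1)) :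
    (bisplitter N).tr s a t ↔ t = bsStep s a := Iff.rfl

lemma splitWitness_bisplitter_iff {N : ℕ} (π : Finset (Finset (Fin N → Bool)))
    (s t : Fin N → Bool) :
    SplitWitness (bisplitter N) π s t ↔
      ∃ a, ¬ inSameBlock π (bsStep s a) (bsStep t a) := by
  constructor
  · rintro ⟨a, s', hs', h⟩
    rw [bisplitter_tr_iff] at hs'
    subst hs'
    exact ⟨a, h (bsStep t a) rfl⟩
  · rintro ⟨a, h⟩
    refine ⟨a, bsStep s a, rfl, ?_⟩
    rintro t' ht'
    rw [bisplitter_tr_iff] at ht'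
    subst ht'
    exact h

lemma stable_succ {N : ℕ} {π : Finset (Finset (Fin N → Bool))}
    (hst : IsStablePartition (bisplitter N) π) (hBP : IsBlockPartition π)
    {s t : Fin N → Bool} (h : inSameBlock π s t) (a : Fin (N - 1)) :
    inSameBlock π (bsStep s a) (bsStep t a) := by
  obtain ⟨B, hB, hs, ht⟩ := h
  obtain ⟨U, hU, hsU⟩ := hBP.2.2 (bsStep s a)
  rcases hst B hB U hU a with hall | hnone
  · obtain ⟨u, hu, huu⟩ := hall t ht
    rw [bisplitter_tr_iff] at huu
    exact ⟨U, hU, hsU, huu ▸ hu⟩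
  · exact absurd ⟨bsStep s a, hsU, rfl⟩ (hnone s hs)

lemma stable_of_succ {N : ℕ} {π : Finset (Finset (Fin N → Bool))}
    (hBP : IsBlockPartition π)
    (h : ∀ s t, inSameBlock π s t → ∀ a, inSameBlock π (bsStep s a) (bsStep t a)) :
    IsStablePartition (bisplitter N) π := by
  intro V hV U hU a
  by_cases hall : ∀ s ∈ V, bsStep s a ∈ U
  · exact Or.inl fun s hs => ⟨bsStep s a, hall s hs, rfl⟩
  · push_neg at hall
    obtain ⟨s₀, hs₀, hns₀⟩ := hall
    right
    rintro t ht ⟨u, hu, huu⟩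
    rw [bisplitter_tr_iff] at huu
    subst huu
    obtain ⟨C, hC, hc1, hc2⟩ := h s₀ t ⟨V, hV, hs₀, ht⟩ a
    rcases eq_or_ne C U with rfl | hne
    · exact hns₀ hc1
    · exact (Finset.disjoint_left.mp (hBP.2.1 C hC U hU hne)) hc2 hu

lemma first_bit_of_m {m : ℕ} (hm : 0 < m) {ρ : Finset (Finset (Fin m → Bool))}
    (hR : RefinesPart ρ (bisplitter m).init) {u v : Fin m → Bool}
    (h : inSameBlock ρ u v) : u ⟨0, hm⟩ = v ⟨0, hm⟩ := by
  obtain ⟨B, hB, h1, h2⟩ := h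
  obtain ⟨I, hI, hBI⟩ := hR B hB
  have hI' : I = prefixBlock m [false] ∨ I = prefixBlock m [true] := by
    simpa [bisplitter] using hI
  rcases hI' with rfl | rfl
  · rw [(mem_prefixBlock_iff_s8 hm u false).mp (hBI h1),
        (mem_prefixBlock_iff_s8 hm v false).mp (hBI h2)]
  · rw [(mem_prefixBlock_iff_s8 hm u true).mp (hBI h1),
        (mem_prefixBlock_iff_s8 hm v true).mp (hBI h2)]

lemma trace_refines_init (hk : 2 < k) {π : Finset (Finset (Fin k → Bool))}
    (hR : RefinesPart π (bisplitter' k).init) :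
    RefinesPart (tracePart k π) (bisplitter (k - 2)).init := by
  rw [← tracePart_init hk]
  exact trace_refines hR

/-- Conversion of a split witness for `B'_k` into one for `B_{k-2}`. -/
lemma key_witness (hk : 2 < k) {π : Finset (Finset (Fin k → Bool))}
    (hBP : IsBlockPartition π) (hR : RefinesPart π (bisplitter' k).init)
    {τ τ' : Fin (k - 2) → Bool}
    (hsame : inSameBlock (tracePart k π) τ τ')
    (hw : ∃ a : Fin (k - 1), ¬ inSameBlock π (bsStep (psiEmb k τ) a) (bsStep (psiEmb k τ') a)) :
    ∃ a' : Fin (k - 2 - 1), ¬ inSameBlock (tracePart k π) (bsStep τ a') (bsStep τ' a') := by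
  obtain ⟨a, hw⟩ := hw
  have hψ : inSameBlock π (psiEmb k τ) (psiEmb k τ') := (inSameBlock_trace_iff τ τ').mp hsame
  have hb : τ ⟨0, by omega⟩ = τ' ⟨0, by omega⟩ := by
    have := first_bit_of_init' hk hR hψ
    rwa [psiEmb_zero hk, psiEmb_zero hk] at this
  -- the case k = 3 is impossible
  rcases Nat.lt_or_ge k 4 with hk3 | hk4
  · exfalso
    have hττ' : τ = τ' := by
      funext q
      have hq : q = ⟨0, by omega⟩ := by
        apply Fin.ext
        have := q.isLt
        omega
      rw [hq]; exact hb
    subst hττ'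
    obtain ⟨B, hB, hmem⟩ := hBP.2.2 (bsStep (psiEmb k τ) a)
    exact hw ⟨B, hB, hmem, hmem⟩
  -- now 4 ≤ k
  rcases a with ⟨j, hj⟩
  by_cases hj0 : j = 0
  · subst hj0
    exfalso
    rw [bsStep_psi_zero hk τ, bsStep_psi_zero hk τ', hb] at hw
    obtain ⟨B, hB, hmem⟩ := hBP.2.2 (baseSt k (!(τ' ⟨0, by omega⟩)))
    exact hw ⟨B, hB, hmem, hmem⟩
  by_cases hj1 : j = 1
  · subst hj1
    rw [bsStep_psi_one hk4 τ, bsStep_psi_one hk4 τ'] at hw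
    by_cases h1 : τ ⟨1, by omega⟩ = false <;> by_cases h2 : τ' ⟨1, by omega⟩ = false
    · rw [if_pos h1, if_pos h2] at hw
      exact absurd hψ hw
    · -- τ stays, τ' jumps to baseSt
      rw [if_pos h1, if_neg h2] at hw
      refine ⟨⟨0, by omega⟩, ?_⟩
      rw [bsStep_m_zero (by omega) τ, bsStep_m_zero (by omega) τ',
          if_pos h1, if_neg h2]
      intro hcon
      have := first_bit_of_m (by omega) (trace_refines_init hk hR) hcon
      simp only [baseSt, if_pos rfl] at this
      rw [hb] at this
      simp at this
    · rw [if_neg h1, if_pos h2] at hw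
      refine ⟨⟨0, by omega⟩, ?_⟩
      rw [bsStep_m_zero (by omega) τ, bsStep_m_zero (by omega) τ',
          if_neg h1, if_pos h2]
      intro hcon
      have := first_bit_of_m (by omega) (trace_refines_init hk hR) hcon
      simp only [baseSt, if_pos rfl] at this
      rw [hb] at this
      simp at this
    · rw [if_neg h1, if_neg h2, hb] at hw
      exfalso
      obtain ⟨B, hB, hmem⟩ := hBP.2.2 (baseSt k (τ' ⟨0, by omega⟩))
      exact hw ⟨B, hB, hmem, hmem⟩
  by_cases hjl : j = k - 2
  · subst hjl
    exfalso
    rw [bsStep_psi_last hk τ, bsStep_psi_last hk τ'] at hw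
    exact hw hψ
  · -- 2 ≤ j ≤ k - 3
    have h2j : 2 ≤ j := by omega
    have h3j : j ≤ k - 3 := by omega
    rw [bsStep_psi_mid hk τ j h2j h3j, bsStep_psi_mid hk τ' j h2j h3j] at hw
    refine ⟨⟨j - 1, by omega⟩, ?_⟩
    intro hcon
    exact hw ((inSameBlock_trace_iff _ _).mp hcon)

lemma trace_stable (hk : 2 < k) {π : Finset (Finset (Fin k → Bool))}
    (hBP : IsBlockPartition π) (hR : RefinesPart π (bisplitter' k).init)
    (hst : IsStablePartition (bisplitter' k) π) :
    IsStablePartition (bisplitter (k - 2)) (tracePart k π) := by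
  have hst' : IsStablePartition (bisplitter k) π := hst
  refine stable_of_succ (tracePart_isBlockPartition hBP) ?_
  intro τ τ' hsame a
  have hψ : inSameBlock π (psiEmb k τ) (psiEmb k τ') := (inSameBlock_trace_iff τ τ').mp hsame
  have hb : τ ⟨0, by omega⟩ = τ' ⟨0, by omega⟩ := by
    have := first_bit_of_init' hk hR hψ
    rwa [psiEmb_zero hk, psiEmb_zero hk] at this
  rcases a with ⟨j, hj⟩
  have hk4 : 4 ≤ k := by omega
  by_cases hj0 : j = 0
  · subst hj0
    have hsucc := stable_succ hst' hBP hψ ⟨1, by omega⟩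
    rw [bsStep_psi_one hk4 τ, bsStep_psi_one hk4 τ'] at hsucc
    rw [bsStep_m_zero (by omega) τ, bsStep_m_zero (by omega) τ']
    by_cases h1 : τ ⟨1, by omega⟩ = false <;> by_cases h2 : τ' ⟨1, by omega⟩ = false
    · rw [if_pos h1, if_pos h2]
      exact hsame
    · rw [if_pos h1, if_neg h2] at hsucc
      exact absurd hsucc (not_same_psi_base hk hR τ _)
    · rw [if_neg h1, if_pos h2] at hsucc
      exact absurd (inSameBlock_symm hsucc) (not_same_psi_base hk hR τ' _)
    · rw [if_neg h1, if_neg h2, hb]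
      exact inSameBlock_trace_self hBP _
  · have h1j : 1 ≤ j := by omega
    have hsucc := stable_succ hst' hBP hψ ⟨j + 1, by omega⟩
    rw [bsStep_psi_mid hk τ (j + 1) (by omega) (by omega),
        bsStep_psi_mid hk τ' (j + 1) (by omega) (by omega)] at hsucc
    rw [inSameBlock_trace_iff]
    exact hsucc

lemma trace_valid (hk : 2 < k) {π π' : Finset (Finset (Fin k → Bool))}
    (hBP : IsBlockPartition π) (hBP' : IsBlockPartition π')
    (hR : RefinesPart π (bisplitter' k).init)
    (hv : ValidRefinement (bisplitter' k) π π')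
    (hne : tracePart k π' ≠ tracePart k π) :
    ValidRefinement (bisplitter (k - 2)) (tracePart k π) (tracePart k π') := by
  refine ⟨trace_refines hv.1, hne, ?_⟩
  intro τ τ' hnot
  by_cases hsame : inSameBlock (tracePart k π) τ τ'
  swap
  · exact Or.inl hsame
  right
  have hψ : ¬ inSameBlock π' (psiEmb k τ) (psiEmb k τ') := by
    intro hc
    exact hnot ((inSameBlock_trace_iff τ τ').mpr hc)
  rcases hv.2.2 (psiEmb k τ) (psiEmb k τ') hψ with hcon | hw | hw
  · exact absurd ((inSameBlock_trace_iff τ τ').mp hsame) hcon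
  · obtain ⟨a, ha⟩ := (splitWitness_bisplitter_iff π _ _).mp hw
    obtain ⟨a', ha'⟩ := key_witness hk hBP hR hsame ⟨a, ha⟩
    exact Or.inl ((splitWitness_bisplitter_iff _ _ _).mpr ⟨a', ha'⟩)
  · obtain ⟨a, ha⟩ := (splitWitness_bisplitter_iff π _ _).mp hw
    obtain ⟨a', ha'⟩ := key_witness hk hBP hR (inSameBlock_symm hsame) ⟨a, ha⟩
    exact Or.inr ((splitWitness_bisplitter_iff _ _ _).mpr ⟨a', ha'⟩)

lemma sum_image_le_nat {α β : Type*} [DecidableEq α] [DecidableEq β]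
    (s : Finset α) (g : α → β) (f : β → ℕ) :
    ∑ C ∈ s.image g, f C ≤ ∑ B ∈ s, f (g B) := by
  classical
  induction s using Finset.induction with
  | empty => simp
  | @insert a s ha ih =>
    rw [Finset.image_insert, Finset.sum_insert ha]
    by_cases hg : g a ∈ s.image g
    · rw [Finset.insert_eq_self.mpr hg]
      exact ih.trans (Nat.le_add_left _ _)
    · rw [Finset.sum_insert hg]
      exact Nat.add_le_add_left ih _

lemma trace_cost (hk : 2 < k) {π π' : Finset (Finset (Fin k → Bool))}
    (hBP : IsBlockPartition π) (hBP' : IsBlockPartition π')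
    (hRef : RefinesPart π' π) :
    IRCstep (tracePart k π) (tracePart k π') ≤ IRCstep π π' := by
  rw [IRCstep, IRCstep]
  have step1 : ∑ C ∈ tracePart k π,
      (C.card - ((tracePart k π').filter fun C' => C' ⊆ C).sup Finset.card)
      ≤ ∑ C ∈ π.image (traceBlock k),
      (C.card - ((tracePart k π').filter fun C' => C' ⊆ C).sup Finset.card) :=
    Finset.sum_le_sum_of_subset (Finset.erase_subset _ _)
  refine step1.trans ?_
  refine (sum_image_le_nat π (traceBlock k) _).trans ?_
  apply Finset.sum_le_sum
  intro B hB
  -- find the largest block of π' inside B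
  have hfilne : (π'.filter fun B' => B' ⊆ B).Nonempty := by
    obtain ⟨s, hs⟩ := Finset.nonempty_of_ne_empty (fun h => hBP.1 (h ▸ hB))
    obtain ⟨B', hB', hsB'⟩ := hBP'.2.2 s
    obtain ⟨B'', hB'', hsub⟩ := hRef B' hB'
    have : B'' = B := by
      by_contra hne
      exact (Finset.disjoint_left.mp (hBP.2.1 B'' hB'' B hB hne)) (hsub hsB') hs
    exact ⟨B', Finset.mem_filter.mpr ⟨hB', this ▸ hsub⟩⟩
  obtain ⟨Bstar, hBstar, hsup⟩ := Finset.exists_mem_eq_sup _ hfilne Finset.card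
  rw [Finset.mem_filter] at hBstar
  have hsupL : (traceBlock k Bstar).card ≤
      ((tracePart k π').filter fun C' => C' ⊆ traceBlock k B).sup Finset.card := by
    rcases Finset.eq_empty_or_nonempty (traceBlock k Bstar) with he | hne'
    · rw [he]; simp
    · refine Finset.le_sup (Finset.mem_filter.mpr ⟨?_, ?_⟩)
      · exact Finset.mem_erase.mpr ⟨Finset.nonempty_iff_ne_empty.mp hne',
          Finset.mem_image_of_mem _ hBstar.1⟩
      · intro τ hτ
        rw [traceBlock, Finset.mem_filter] at hτ ⊢
        exact ⟨hτ.1, hBstar.2 hτ.2⟩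
  have hsub2 : traceBlock k Bstar ⊆ traceBlock k B := by
    intro τ hτ
    rw [traceBlock, Finset.mem_filter] at hτ ⊢
    exact ⟨hτ.1, hBstar.2 hτ.2⟩
  have hcard : (traceBlock k B).card - (traceBlock k Bstar).card ≤ B.card - Bstar.card := by
    rw [← Finset.card_sdiff_of_subset hsub2, ← Finset.card_sdiff_of_subset hBstar.2]
    apply Finset.card_le_card_of_injOn (psiEmb k)
    · intro τ hτ
      rw [Finset.mem_coe, Finset.mem_sdiff] at hτ ⊢
      rw [traceBlock, Finset.mem_filter] at hτ
      refine ⟨hτ.1.2, fun hc => hτ.2 ?_⟩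
      rw [traceBlock, Finset.mem_filter]
      exact ⟨Finset.mem_univ _, hc⟩
    · exact fun x _ y _ h => psiEmb_injective hk h
  calc (traceBlock k B).card - ((tracePart k π').filter fun C' => C' ⊆ traceBlock k B).sup Finset.card
      ≤ (traceBlock k B).card - (traceBlock k Bstar).card := Nat.sub_le_sub_left hsupL _
    _ ≤ B.card - Bstar.card := hcard
    _ = B.card - (π'.filter fun B' => B' ⊆ B).sup Finset.card := by rw [hsup]

lemma IRCseq_cons {S : Type} [DecidableEq S] (n : ℕ) (A : Finset (Finset S))
    (s : ℕ → Finset (Finset S)) :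
    IRCseq (n + 1) (fun i => Nat.casesOn i A s) = IRCstep A (s 0) + IRCseq n s := by
  rw [IRCseq, Finset.sum_range_succ', IRCseq, Nat.add_comm]
  congr 1

/-- The main reduction: a valid refinement sequence for `B'_k` induces one for
`B_{k-2}` of no greater cost. -/
lemma reduction (hk : 2 < k) :
    ∀ n (seq : ℕ → Finset (Finset (Fin k → Bool))),
      RefinesPart (seq 0) (bisplitter' k).init →
      (∀ i ≤ n, IsBlockPartition (seq i)) →
      (∀ i < n, ValidRefinement (bisplitter' k) (seq i) (seq (i + 1))) →
      IsStablePartition (bisplitter' k) (seq n) →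
      ∃ n' seq', seq' 0 = tracePart k (seq 0) ∧
        (∀ i ≤ n', IsBlockPartition (seq' i)) ∧
        (∀ i < n', ValidRefinement (bisplitter (k - 2)) (seq' i) (seq' (i + 1))) ∧
        IsStablePartition (bisplitter (k - 2)) (seq' n') ∧
        IRCseq n' seq' ≤ IRCseq n seq := by
  intro n
  induction n with
  | zero =>
    intro seq hr hbp hval hstab
    refine ⟨0, fun _ => tracePart k (seq 0), rfl, ?_, ?_, ?_, le_rfl⟩
    · intro i _
      exact tracePart_isBlockPartition (hbp 0 le_rfl)
    · intro i hi
      omega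
    · exact trace_stable hk (hbp 0 le_rfl) hr hstab
  | succ n ih =>
    intro seq hr hbp hval hstab
    have hr1 : RefinesPart (seq 1) (bisplitter' k).init :=
      refinesPart_trans (hval 0 (Nat.succ_pos n)).1 hr
    obtain ⟨n', s', h0', hbp', hval', hstab', hc'⟩ :=
      ih (fun i => seq (i + 1)) hr1 (fun i hi => hbp (i + 1) (by omega))
        (fun i hi => hval (i + 1) (by omega)) hstab
    have hsum : IRCseq (n + 1) seq =
        IRCseq n (fun i => seq (i + 1)) + IRCstep (seq 0) (seq 1) := by
      rw [IRCseq, IRCseq, Finset.sum_range_succ']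
    by_cases he : tracePart k (seq 1) = tracePart k (seq 0)
    · refine ⟨n', s', by rw [h0', he], hbp', hval', hstab', ?_⟩
      rw [hsum]
      exact hc'.trans (Nat.le_add_right _ _)
    · refine ⟨n' + 1, fun i => Nat.casesOn i (tracePart k (seq 0)) s', rfl, ?_, ?_, ?_, ?_⟩
      · intro i hi
        cases i with
        | zero => exact tracePart_isBlockPartition (hbp 0 (by omega))
        | succ j => exact hbp' j (by omega)
      · intro i hi
        cases i with
        | zero =>
          show ValidRefinement _ (tracePart k (seq 0)) (s' 0)
          rw [h0']
          exact trace_valid hk (hbp 0 (by omega)) (hbp 1 (by omega)) hr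
            (hval 0 (by omega)) he
        | succ j => exact hval' j (by omega)
      · exact hstab'
      · rw [hsum, IRCseq_cons, Nat.add_comm]
        refine Nat.add_le_add hc' ?_
        rw [show s' 0 = tracePart k (seq 1) from h0']
        exact trace_cost hk (hbp 0 (by omega)) (hbp 1 (by omega)) (hval 0 (by omega)).1

end Reduction

/-- For k > 2, every valid refinement sequence for the updated bisplitter
`B'_k` (initial partition updated by the end structure oracle) costs at least
`IRC(B_{k-2})`. -/
theorem updated_bisplitter_cost_dominates_smaller_bisplitter
    (k : ℕ) (hk : 2 < k) (n : ℕ)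
    (seq : ℕ → Finset (Finset (Fin k → Bool)))
    (hseq : ValidRefinementSeq (bisplitter' k) n seq) :
    IRC (bisplitter (k - 2)) ≤ IRCseq n seq := by
  obtain ⟨h0, hbp, hval, hstab⟩ := hseq
  have hr : RefinesPart (seq 0) (bisplitter' k).init := by
    rw [h0]; exact refinesPart_refl _
  obtain ⟨n', seq', h0', hbp', hval', hstab', hc'⟩ :=
    reduction hk n seq hr hbp hval hstab
  have hmem : IRCseq n' seq' ∈
      {c | ∃ n seq, ValidRefinementSeq (bisplitter (k - 2)) n seq ∧ IRCseq n seq = c} :=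
    ⟨n', seq', ⟨by rw [h0', h0, tracePart_init hk], hbp', hval', hstab'⟩, rfl⟩
  rw [IRC]
  exact (Nat.sInf_le hmem).trans hc'
end
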